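/- arXiv:1301.6991 — 10 statements merged into one kernel-verified Lean document; each statement's English description precedes it below -/
import Mathlib

section
/- Let A = (a,0) and B = (-a,0) with 0 < a < 1 be two points in the Beltrami–Klein model of the hyperbolic plane, and let P = (x,y) be a point with x² + y² < 1 and y ≠ 0. If the hyperbolic angle at P between the hyperbolic lines PA and PB equals π/2, then (x,y) satisfies x²/a² + y²(1+a²)/a² = 1. -/
open Real

/-- Lorentzian bilinear form of signature (1,2) on coordinate triples. -/
def lor (u v : ℝ × ℝ × ℝ) : ℝ := -(u.1 * v.1) + u.2.1 * v.2.1 + u.2.2 * v.2.2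

/-!
Both lines pass through the proper point `P`, hence are spacelike (`⟨u,u⟩, ⟨v,v⟩ > 0`), so the
square root in the angle formula is nonzero and a right angle means `⟨u,v⟩ = 0`. Eliminating the
line coordinates with the four incidences turns `⟨u,v⟩ = 0` into the ellipse equation.
-/

/- By Cauchy–Schwarz, `1 = (p · w)² ≤ |p|² |w|² < |w|²`. -/
theorem lor_self_pos_of_incident {p₁ p₂ w₁ w₂ : ℝ} (hp : p₁ ^ 2 + p₂ ^ 2 < 1)
    (hw : 1 + p₁ * w₁ + p₂ * w₂ = 0) : 0 < lor (1, w₁, w₂) (1, w₁, w₂) := by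
  have hw_pos : 0 < w₁ ^ 2 + w₂ ^ 2 := by
    by_contra! h
    have : w₁ = 0 := by nlinarith [sq_nonneg w₁, sq_nonneg w₂]
    have : w₂ = 0 := by nlinarith [sq_nonneg w₁, sq_nonneg w₂]
    simp_all
  have cauchy_schwarz : (p₁ * w₁ + p₂ * w₂) ^ 2 ≤ (p₁ ^ 2 + p₂ ^ 2) * (w₁ ^ 2 + w₂ ^ 2) := by
    nlinarith [sq_nonneg (p₁ * w₂ - p₂ * w₁)]
  have hdot : p₁ * w₁ + p₂ * w₂ = -1 := by linarith
  simp only [lor]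
  nlinarith

theorem lor_eq_zero_of_angle_eq_pi_div_two {u v : ℝ × ℝ × ℝ} (hu : 0 < lor u u)
    (hv : 0 < lor v v) (h : -lor u v / √(lor u u * lor v v) = cos (π / 2)) :
    lor u v = 0 := by
  have hsqrt : √(lor u u * lor v v) ≠ 0 := by positivity
  rw [cos_pi_div_two, div_eq_zero_iff, neg_eq_zero] at h
  exact h.resolve_right hsqrt

theorem stmt_0_general (a x y u₁ u₂ v₁ v₂ : ℝ)
    (hP : x ^ 2 + y ^ 2 < 1)
    (hAu : 1 + a * u₁ + 0 * u₂ = 0)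
    (hPu : 1 + x * u₁ + y * u₂ = 0)
    (hBv : 1 + (-a) * v₁ + 0 * v₂ = 0)
    (hPv : 1 + x * v₁ + y * v₂ = 0)
    (hangle : -(lor (1, u₁, u₂) (1, v₁, v₂)) /
        Real.sqrt (lor (1, u₁, u₂) (1, u₁, u₂) * lor (1, v₁, v₂) (1, v₁, v₂))
        = Real.cos (π / 2)) :
    x ^ 2 / a ^ 2 + y ^ 2 * (1 + a ^ 2) / a ^ 2 = 1 := by
  have horth := lor_eq_zero_of_angle_eq_pi_div_two
    (lor_self_pos_of_incident hP hPu) (lor_self_pos_of_incident hP hPv) hangle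
  simp only [lor] at horth
  have ha : a ≠ 0 := by rintro rfl; simp at hAu
  -- `a²y² ⟨u,v⟩ = 0` with `a u₁ = -1`, `a v₁ = 1`, `a y u₂ = x - a`, `a y v₂ = -(x + a)`
  have hellipse : x ^ 2 + (1 + a ^ 2) * y ^ 2 = a ^ 2 := by
    linear_combination (-a ^ 2 * y ^ 2) * horth + (a * y ^ 2 * v₁ - a * x * y * v₂) * hAu
      + (y ^ 2 + x * (x - a)) * hBv + (a ^ 2 * y * v₂) * hPu + (a * (x - a)) * hPv
  field_simp
  linear_combination hellipse

/-- If the hyperbolic angle at a proper point `P = (x,y)` between the lines `PA`, `PB`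
(for `A = (a,0)`, `B = (-a,0)` in the Beltrami–Klein model) is a right angle, then
`(x,y)` lies on the ellipse `x²/a² + y²(1+a²)/a² = 1`. -/
theorem stmt_0 (a x y u₁ u₂ v₁ v₂ : ℝ)
    (ha : 0 < a) (ha' : a < 1) (hP : x ^ 2 + y ^ 2 < 1) (hy : y ≠ 0)
    (hAu : 1 + a * u₁ + 0 * u₂ = 0)
    (hPu : 1 + x * u₁ + y * u₂ = 0)
    (hBv : 1 + (-a) * v₁ + 0 * v₂ = 0)
    (hPv : 1 + x * v₁ + y * v₂ = 0)
    (hangle : -(lor (1, u₁, u₂) (1, v₁, v₂)) /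
        Real.sqrt (lor (1, u₁, u₂) (1, u₁, u₂) * lor (1, v₁, v₂) (1, v₁, v₂))
        = Real.cos (π / 2)) :
    x ^ 2 / a ^ 2 + y ^ 2 * (1 + a ^ 2) / a ^ 2 = 1 :=
  stmt_0_general a x y u₁ u₂ v₁ v₂ hP hAu hPu hBv hPv hangle
end

section
/- In the elliptic plane modeled projectively with bilinear form ⟨x,y⟩ = x⁰y⁰+x¹y¹+x²y², let A = (1,a,0), B = (1,-a,0) with 0 < a ≤ 1, and P = (1,x,y) with y ≠ 0. Then the angle α under which segment AB is seen from P satisfies cos α = (1 - 1/a² + (a²-x²)/(y²a²)) / √((1 + 1/a² + ((a-x)/(ya))²)(1 + 1/a² + ((a+x)/(ya))²)). -/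
open Real

/-- Positive definite bilinear form on coordinate triples (elliptic plane). -/
def ell (u v : ℝ × ℝ × ℝ) : ℝ := u.1 * v.1 + u.2.1 * v.2.1 + u.2.2 * v.2.2

/-- The angle under which the elliptic segment `AB` (`A = (1,a,0)`, `B = (1,-a,0)`)
is seen from `P = (1,x,y)` with `y ≠ 0` in the projective model of the elliptic plane. -/
theorem stmt_2 (a x y u₁ u₂ v₁ v₂ α : ℝ)
    (ha : 0 < a) (ha' : a ≤ 1) (hy : y ≠ 0)
    (hAu : 1 + a * u₁ + 0 * u₂ = 0)
    (hPu : 1 + x * u₁ + y * u₂ = 0)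
    (hBv : 1 + (-a) * v₁ + 0 * v₂ = 0)
    (hPv : 1 + x * v₁ + y * v₂ = 0)
    (hangle : Real.cos α = ell (1, u₁, u₂) (1, v₁, v₂) /
        Real.sqrt (ell (1, u₁, u₂) (1, u₁, u₂) * ell (1, v₁, v₂) (1, v₁, v₂))) :
    Real.cos α = (1 - 1 / a ^ 2 + (a ^ 2 - x ^ 2) / (y ^ 2 * a ^ 2)) /
      Real.sqrt ((1 + 1 / a ^ 2 + ((a - x) / (y * a)) ^ 2) *
        (1 + 1 / a ^ 2 + ((a + x) / (y * a)) ^ 2)) := by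
  have ha0 : a ≠ 0 := ne_of_gt ha
  have hu₁ : u₁ = -1 / a := by field_simp; linarith
  have hv₁ : v₁ = 1 / a := by field_simp; linarith
  have hu₂ : u₂ = (x - a) / (a * y) := by
    rw [hu₁] at hPu; field_simp at hPu ⊢; linarith
  have hv₂ : v₂ = -(a + x) / (a * y) := by
    rw [hv₁] at hPv; field_simp at hPv ⊢; linarith
  rw [hangle]
  subst hu₁ hv₁ hu₂ hv₂
  simp only [ell]
  congr 1
  · field_simp; ring
  · congr 1; field_simp; ring
end

section
/- In the Beltrami–Klein model of the hyperbolic plane with foci F₁ = (1,f,0), F₂ = (1,-f,0), 0 < f < 1, a proper point P = (1,x,y) with x²+y² < 1 satisfies d(P,F₁) + d(P,F₂) = 2a (with 2a > d(F₁,F₂)) only if x²/tanh²(a) + y²/(1 + 1/((f²-1)cosh²(a))) = 1. -/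
open Real

/-!
Write `D = ⟨P,P⟩⟨F,F⟩` (the same for both foci) and `bᵢ = -⟨P,Fᵢ⟩`, so that `cosh dᵢ = bᵢ/√D`.
Expanding `cosh (d₁ + d₂) = cosh 2a` by the addition formula and squaring away the product of
sines gives `(D cosh 2a - b₁b₂)² = (b₁² - D)(b₂² - D)`. In Klein coordinates this polynomial
relation factors as `4(1 - f²)(1 - x² - y²)` times the cleared ellipse equation, and the
condition `2a > d(F₁,F₂)`, i.e. `(1 - f²) cosh² a > 1`, makes all denominators nonzero.
-/

theorem sq_mul_cosh_add_sub_eq {d₁ d₂ b₁ b₂ s : ℝ} (hs : s ≠ 0)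
    (h₁ : cosh d₁ = b₁ / s) (h₂ : cosh d₂ = b₂ / s) :
    (s ^ 2 * cosh (d₁ + d₂) - b₁ * b₂) ^ 2 = (b₁ ^ 2 - s ^ 2) * (b₂ ^ 2 - s ^ 2) := by
  have hb₁ : b₁ = s * cosh d₁ := by rw [h₁]; field_simp
  have hb₂ : b₂ = s * cosh d₂ := by rw [h₂]; field_simp
  have hsinh : s ^ 2 * cosh (d₁ + d₂) - b₁ * b₂ = s ^ 2 * (sinh d₁ * sinh d₂) := by
    rw [cosh_add, hb₁, hb₂]; ring
  rw [hsinh, hb₁, hb₂]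
  linear_combination (-s ^ 4) * ((cosh d₂ ^ 2 - 1) * cosh_sq d₁ + sinh d₁ ^ 2 * cosh_sq d₂)

theorem lor_one_one (x y x' y' : ℝ) : lor (1, x, y) (1, x', y') = x * x' + y * y' - 1 := by
  simp only [lor]; ring

theorem cosh_two_mul_eq (a : ℝ) : cosh (2 * a) = 2 * cosh a ^ 2 - 1 := by
  rw [cosh_two_mul, sinh_sq]; ring

theorem tanh_sq_eq (a : ℝ) : tanh a ^ 2 = (cosh a ^ 2 - 1) / cosh a ^ 2 := by
  rw [tanh_eq_sinh_div_cosh, div_pow, sinh_sq]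

theorem klein_ellipse_cleared_of_focal_relation {f c x y : ℝ} (hP : x ^ 2 + y ^ 2 ≠ 1)
    (hf : f ^ 2 ≠ 1)
    (h : ((x ^ 2 + y ^ 2 - 1) * (f ^ 2 - 1) * (2 * c ^ 2 - 1) - (1 - f * x) * (1 + f * x)) ^ 2
      = ((1 - f * x) ^ 2 - (x ^ 2 + y ^ 2 - 1) * (f ^ 2 - 1))
        * ((1 + f * x) ^ 2 - (x ^ 2 + y ^ 2 - 1) * (f ^ 2 - 1))) :
    x ^ 2 * c ^ 2 * ((1 - f ^ 2) * c ^ 2 - 1) + y ^ 2 * (1 - f ^ 2) * c ^ 2 * (c ^ 2 - 1)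
      = (c ^ 2 - 1) * ((1 - f ^ 2) * c ^ 2 - 1) := by
  have hfactor : (4 * (1 - f ^ 2) * (1 - x ^ 2 - y ^ 2)) *
      (x ^ 2 * c ^ 2 * ((1 - f ^ 2) * c ^ 2 - 1) + y ^ 2 * (1 - f ^ 2) * c ^ 2 * (c ^ 2 - 1)
        - (c ^ 2 - 1) * ((1 - f ^ 2) * c ^ 2 - 1)) = 0 := by
    linear_combination (-1 : ℝ) * h
  have hne : 4 * (1 - f ^ 2) * (1 - x ^ 2 - y ^ 2) ≠ 0 := by
    refine mul_ne_zero (mul_ne_zero four_ne_zero (sub_ne_zero.2 hf.symm)) ?_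
    rw [sub_sub]
    exact sub_ne_zero.2 hP.symm
  exact sub_eq_zero.mp ((mul_eq_zero.mp hfactor).resolve_left hne)

theorem klein_ellipse_of_cleared {f c x y : ℝ} (hc : 1 < (1 - f ^ 2) * c ^ 2)
    (h : x ^ 2 * c ^ 2 * ((1 - f ^ 2) * c ^ 2 - 1) + y ^ 2 * (1 - f ^ 2) * c ^ 2 * (c ^ 2 - 1)
      = (c ^ 2 - 1) * ((1 - f ^ 2) * c ^ 2 - 1)) :
    x ^ 2 / ((c ^ 2 - 1) / c ^ 2) + y ^ 2 / (1 + 1 / ((f ^ 2 - 1) * c ^ 2)) = 1 := by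
  have hc1 : c ^ 2 - 1 ≠ 0 := by nlinarith [sq_nonneg f, sq_nonneg c]
  have hk : (1 - f ^ 2) * c ^ 2 - 1 ≠ 0 := by linarith
  have hk0 : 1 - f ^ 2 ≠ 0 := by rintro h0; rw [h0] at hc; norm_num at hc
  have hden : 1 + 1 / ((f ^ 2 - 1) * c ^ 2) = ((1 - f ^ 2) * c ^ 2 - 1) / ((1 - f ^ 2) * c ^ 2) := by
    have hc0 : c ≠ 0 := by rintro rfl; norm_num at hc
    have hf : f ^ 2 - 1 ≠ 0 := by rwa [← neg_sub, neg_ne_zero]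
    field_simp
    ring
  rw [hden, div_div_eq_mul_div, div_div_eq_mul_div, div_add_div _ _ hc1 hk,
    div_eq_one_iff_eq (mul_ne_zero hc1 hk)]
  linear_combination h

theorem one_lt_mul_cosh_sq_of_lt {f a dF : ℝ} (hf : f ^ 2 < 1) (hdF : 0 ≤ dF)
    (hF : cosh dF = (1 + f ^ 2) / (1 - f ^ 2)) (ha : dF < 2 * a) :
    1 < (1 - f ^ 2) * cosh a ^ 2 := by
  have hlt : cosh dF < cosh (2 * a) := by
    rw [cosh_lt_cosh, abs_of_nonneg hdF, abs_of_nonneg (by linarith)]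
    exact ha
  rw [hF, cosh_two_mul_eq, div_lt_iff₀ (by linarith)] at hlt
  nlinarith

theorem stmt_3_general (f a x y d₁ d₂ dF : ℝ)
    (hf : 0 < f) (hf' : f < 1) (hP : x ^ 2 + y ^ 2 < 1)
    (hdF : 0 ≤ dF)
    (h₁ : Real.cosh d₁ = -(lor (1, x, y) (1, f, 0)) /
        Real.sqrt (lor (1, x, y) (1, x, y) * lor (1, f, 0) (1, f, 0)))
    (h₂ : Real.cosh d₂ = -(lor (1, x, y) (1, -f, 0)) /
        Real.sqrt (lor (1, x, y) (1, x, y) * lor (1, -f, 0) (1, -f, 0)))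
    (hF : Real.cosh dF = -(lor (1, f, 0) (1, -f, 0)) /
        Real.sqrt (lor (1, f, 0) (1, f, 0) * lor (1, -f, 0) (1, -f, 0)))
    (hsum : d₁ + d₂ = 2 * a) (ha : 2 * a > dF) :
    x ^ 2 / Real.tanh a ^ 2 +
      y ^ 2 / (1 + 1 / ((f ^ 2 - 1) * Real.cosh a ^ 2)) = 1 := by
  have hf2 : f ^ 2 < 1 := by nlinarith
  have hD : 0 < lor (1, x, y) (1, x, y) * lor (1, f, 0) (1, f, 0) := by
    simp only [lor_one_one]; nlinarith
  have hD₂ : lor (1, x, y) (1, x, y) * lor (1, -f, 0) (1, -f, 0)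
      = lor (1, x, y) (1, x, y) * lor (1, f, 0) (1, f, 0) := by
    simp only [lor_one_one]; ring
  have hrel := sq_mul_cosh_add_sub_eq (sqrt_pos.2 hD).ne' h₁ (hD₂ ▸ h₂)
  rw [hsum, sq_sqrt hD.le, cosh_two_mul_eq] at hrel
  simp only [lor_one_one] at hrel
  have hFf : cosh dF = (1 + f ^ 2) / (1 - f ^ 2) := by
    rw [hF, lor_one_one, lor_one_one, lor_one_one,
      show (f * f + 0 * 0 - 1) * (-f * -f + 0 * 0 - 1) = (1 - f ^ 2) ^ 2 by ring,
      sqrt_sq (by linarith)]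
    ring
  rw [tanh_sq_eq]
  refine klein_ellipse_of_cleared (one_lt_mul_cosh_sq_of_lt hf2 hdF hFf ha)
    (klein_ellipse_cleared_of_focal_relation hP.ne hf2.ne ?_)
  linear_combination hrel

/-- A proper point of the Beltrami–Klein model whose hyperbolic distances to the foci
`F₁ = (1,f,0)`, `F₂ = (1,-f,0)` sum to `2a` (with `2a` larger than the distance of the foci)
lies on the ellipse `x²/tanh²a + y²/(1 + 1/((f²-1)cosh²a)) = 1`. -/
theorem stmt_3 (f a x y d₁ d₂ dF : ℝ)
    (hf : 0 < f) (hf' : f < 1) (hP : x ^ 2 + y ^ 2 < 1)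
    (hd₁ : 0 ≤ d₁) (hd₂ : 0 ≤ d₂) (hdF : 0 ≤ dF)
    (h₁ : Real.cosh d₁ = -(lor (1, x, y) (1, f, 0)) /
        Real.sqrt (lor (1, x, y) (1, x, y) * lor (1, f, 0) (1, f, 0)))
    (h₂ : Real.cosh d₂ = -(lor (1, x, y) (1, -f, 0)) /
        Real.sqrt (lor (1, x, y) (1, x, y) * lor (1, -f, 0) (1, -f, 0)))
    (hF : Real.cosh dF = -(lor (1, f, 0) (1, -f, 0)) /
        Real.sqrt (lor (1, f, 0) (1, f, 0) * lor (1, -f, 0) (1, -f, 0)))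
    (hsum : d₁ + d₂ = 2 * a) (ha : 2 * a > dF) :
    x ^ 2 / Real.tanh a ^ 2 +
      y ^ 2 / (1 + 1 / ((f ^ 2 - 1) * Real.cosh a ^ 2)) = 1 :=
  stmt_3_general f a x y d₁ d₂ dF hf hf' hP hdF h₁ h₂ hF hsum ha
end

section
/- In the Beltrami–Klein model, let the proper hyperbolic parabola have focus F = (1,0,p) with 0 < p < 1 and directrix the x-axis. A proper point X = (1,x,y) with x²+y² < 1 satisfies d(X,F) = d(X, x-axis) if and only if x² + (1-py)²/(1-p²) = 1, where d(X, x-axis) is realized at the foot point X' = (1,x,0). -/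
open Real

/-- In the Beltrami–Klein model, a proper point `X = (1,x,y)` is equidistant from the
focus `F = (1,0,p)` and the directrix (the `x`-axis, the distance being realized at the
foot `X' = (1,x,0)`) if and only if `x² + (1-py)²/(1-p²) = 1`. -/
theorem stmt_6 (p x y d₁ d₂ : ℝ)
    (hp : 0 < p) (hp' : p < 1) (hX : x ^ 2 + y ^ 2 < 1)
    (hd₁ : 0 ≤ d₁) (hd₂ : 0 ≤ d₂)
    (h₁ : Real.cosh d₁ = -(lor (1, x, y) (1, 0, p)) /
        Real.sqrt (lor (1, x, y) (1, x, y) * lor (1, 0, p) (1, 0, p)))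
    (h₂ : Real.cosh d₂ = -(lor (1, x, y) (1, x, 0)) /
        Real.sqrt (lor (1, x, y) (1, x, y) * lor (1, x, 0) (1, x, 0))) :
    d₁ = d₂ ↔ x ^ 2 + (1 - p * y) ^ 2 / (1 - p ^ 2) = 1 := by
  have hA : 0 < 1 - x ^ 2 - y ^ 2 := by nlinarith
  have hB : 0 < 1 - p ^ 2 := by nlinarith
  have hy : y ^ 2 < 1 := by nlinarith [sq_nonneg x]
  have hC : 0 < 1 - x ^ 2 := by nlinarith [sq_nonneg y]
  have hpy : 0 < 1 - p * y := by nlinarith [sq_nonneg (p - y)]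
  have e₁ : lor (1, x, y) (1, x, y) * lor (1, 0, p) (1, 0, p)
      = (1 - x ^ 2 - y ^ 2) * (1 - p ^ 2) := by simp [lor]; ring
  have e₂ : lor (1, x, y) (1, x, y) * lor (1, x, 0) (1, x, 0)
      = (1 - x ^ 2 - y ^ 2) * (1 - x ^ 2) := by simp [lor]; ring
  have n₁ : -(lor (1, x, y) (1, 0, p)) = 1 - p * y := by simp [lor]; ring
  have n₂ : -(lor (1, x, y) (1, x, 0)) = 1 - x ^ 2 := by simp [lor]; ring
  rw [e₁, n₁, Real.sqrt_mul hA.le] at h₁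
  rw [e₂, n₂, Real.sqrt_mul hA.le] at h₂
  set sA := Real.sqrt (1 - x ^ 2 - y ^ 2) with hsA
  set sB := Real.sqrt (1 - p ^ 2) with hsB
  set sC := Real.sqrt (1 - x ^ 2) with hsC
  have hsApos : 0 < sA := Real.sqrt_pos.mpr hA
  have hsBpos : 0 < sB := Real.sqrt_pos.mpr hB
  have hsCpos : 0 < sC := Real.sqrt_pos.mpr hC
  have sB2 : sB ^ 2 = 1 - p ^ 2 := Real.sq_sqrt hB.le
  have sC2 : sC ^ 2 = 1 - x ^ 2 := Real.sq_sqrt hC.le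
  -- cosh equality iff squared relation
  have key : Real.cosh d₁ = Real.cosh d₂ ↔
      (1 - p * y) ^ 2 = (1 - x ^ 2) * (1 - p ^ 2) := by
    rw [h₁, h₂]
    constructor
    · intro h
      have h0 := (div_eq_div_iff (by positivity) (by positivity)).mp h
      have h' : (1 - p * y) * sC = (1 - x ^ 2) * sB :=
        mul_left_cancel₀ hsApos.ne' (by linear_combination h0)
      have hsq : ((1 - p * y) * sC) ^ 2 = ((1 - x ^ 2) * sB) ^ 2 := by rw [h']
      simp only [mul_pow, sB2, sC2] at hsq
      exact mul_left_cancel₀ hC.ne' (by linear_combination hsq)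
    · intro h
      have h' : (1 - p * y) * sC = (1 - x ^ 2) * sB := by
        have hsq : ((1 - p * y) * sC) ^ 2 = ((1 - x ^ 2) * sB) ^ 2 := by
          simp only [mul_pow, sB2, sC2]; linear_combination (1 - x ^ 2) * h
        have hl : 0 ≤ (1 - p * y) * sC := by positivity
        have hr : 0 ≤ (1 - x ^ 2) * sB := by positivity
        calc (1 - p * y) * sC = Real.sqrt (((1 - p * y) * sC) ^ 2) :=
              (Real.sqrt_sq hl).symm
          _ = Real.sqrt (((1 - x ^ 2) * sB) ^ 2) := by rw [hsq]
          _ = (1 - x ^ 2) * sB := Real.sqrt_sq hr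
      exact (div_eq_div_iff (by positivity) (by positivity)).mpr
        (by linear_combination sA * h')
  constructor
  · intro h
    have hc : (1 - p * y) ^ 2 = (1 - x ^ 2) * (1 - p ^ 2) := key.mp (by rw [h])
    field_simp
    linear_combination hc
  · intro h
    have hc : (1 - p * y) ^ 2 = (1 - x ^ 2) * (1 - p ^ 2) := by
      field_simp at h
      linear_combination h
    have hco : Real.cosh d₁ = Real.cosh d₂ := key.mpr hc
    rcases lt_trichotomy d₁ d₂ with hlt | heq | hgt
    · exfalso
      have : Real.cosh d₁ < Real.cosh d₂ := by
        rw [Real.cosh_lt_cosh, abs_of_nonneg hd₁, abs_of_nonneg hd₂]; exact hlt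
      linarith [this, hco.le]
    · exact heq
    · exfalso
      have : Real.cosh d₂ < Real.cosh d₁ := by
        rw [Real.cosh_lt_cosh, abs_of_nonneg hd₂, abs_of_nonneg hd₁]; exact hgt
      linarith [this, hco.le]
end

section
/- In the elliptic plane with the form ⟨x,y⟩ = x⁰y⁰+x¹y¹+x²y², let F₁ = (1,f,0), F₂ = (1,-f,0), f > 0. A point P = (1,x,y) satisfying d(P,F₁) + d(P,F₂) = 2a (with 2a > d(F₁,F₂) and a < π/2) satisfies x²/tan²(a) + y²/(1/((1+f²)cos²(a)) - 1) = 1. -/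
/-!
Write `P = (1, x, y)`, `Q = ⟨P, P⟩ = 1 + x² + y²`, `F = 1 + f²`. The focal distances satisfy
`cos d₁ = (1 + f x)/√(QF)` and `cos d₂ = (1 - f x)/√(QF)`. Squaring
`cos d₁ cos d₂ - cos 2a = sin d₁ sin d₂` eliminates the sines, and the square root disappears with
it, leaving the polynomial relation `QF (1 - cos²a) cos²a = 1 - cos²a + f²x² cos²a`, which is the
ellipse equation with its denominators cleared. The condition `2a > d(F₁, F₂)` is exactly
`F cos²a < 1`, which makes the second denominator positive.
-/

open Real

theorem sq_cos_mul_cos_sub_cos_add (u v : ℝ) :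
    (cos u * cos v - cos (u + v)) ^ 2 = (1 - cos u ^ 2) * (1 - cos v ^ 2) := by
  rw [cos_add, ← sin_sq, ← sin_sq]
  ring

@[simp]
theorem ell_one_one (x y x' y' : ℝ) : ell (1, x, y) (1, x', y') = 1 + x * x' + y * y' := by
  simp only [ell]
  ring

theorem cos_dist_eq_of_ell {d g x y : ℝ}
    (h : cos d = ell (1, x, y) (1, g, 0) / √(ell (1, x, y) (1, x, y) * ell (1, g, 0) (1, g, 0))) :
    cos d = (1 + g * x) / √((1 + x ^ 2 + y ^ 2) * (1 + g ^ 2)) := by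
  rw [h]
  simp only [ell_one_one]
  ring_nf

theorem cos_focal_distance {f dF : ℝ}
    (hF : cos dF = ell (1, f, 0) (1, -f, 0) /
        √(ell (1, f, 0) (1, f, 0) * ell (1, -f, 0) (1, -f, 0))) :
    cos dF = (1 - f ^ 2) / (1 + f ^ 2) := by
  have hnorm : ell (1, f, 0) (1, f, 0) * ell (1, -f, 0) (1, -f, 0) = (1 + f ^ 2) ^ 2 := by
    simp only [ell_one_one]
    ring
  rw [hF, hnorm, sqrt_sq (by positivity), ell_one_one]
  ring

theorem one_add_sq_mul_cos_sq_lt_one {f a dF : ℝ} (hdF : 0 ≤ dF)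
    (hcos : cos dF = (1 - f ^ 2) / (1 + f ^ 2)) (h2a : 2 * a ≤ π) (ha : dF < 2 * a) :
    (1 + f ^ 2) * cos a ^ 2 < 1 := by
  have h := cos_lt_cos_of_nonneg_of_le_pi hdF h2a ha
  rw [hcos, cos_two_mul, lt_div_iff₀ (by positivity)] at h
  nlinarith

theorem focal_cos_relation {f x y c S : ℝ} (hS : S ^ 2 = (1 + x ^ 2 + y ^ 2) * (1 + f ^ 2))
    (h : ((1 + f * x) / S * ((1 - f * x) / S) - (2 * c ^ 2 - 1)) ^ 2
      = (1 - ((1 + f * x) / S) ^ 2) * (1 - ((1 - f * x) / S) ^ 2)) :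
    (1 + x ^ 2 + y ^ 2) * (1 + f ^ 2) * (1 - c ^ 2) * c ^ 2
      = (1 - c ^ 2) + f ^ 2 * x ^ 2 * c ^ 2 := by
  have hQF : (1 + x ^ 2 + y ^ 2) * (1 + f ^ 2) ≠ 0 := by positivity
  have hS0 : S ≠ 0 := by
    rintro rfl
    apply hQF
    rw [← hS]
    ring
  field_simp at h
  rw [hS] at h
  refine mul_left_cancel₀ hQF ?_
  linear_combination (-1 / 4) * h

theorem ellipse_of_focal_cos_relation {f a x y : ℝ} (hcos : cos a ≠ 0) (hsin : sin a ≠ 0)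
    (hlt : (1 + f ^ 2) * cos a ^ 2 < 1)
    (h : (1 + x ^ 2 + y ^ 2) * (1 + f ^ 2) * (1 - cos a ^ 2) * cos a ^ 2
      = (1 - cos a ^ 2) + f ^ 2 * x ^ 2 * cos a ^ 2) :
    x ^ 2 / tan a ^ 2 + y ^ 2 / (1 / ((1 + f ^ 2) * cos a ^ 2) - 1) = 1 := by
  have h1 : 1 - cos a ^ 2 ≠ 0 := by rw [← sin_sq]; positivity
  have h2 : 1 - (1 + f ^ 2) * cos a ^ 2 ≠ 0 := by linarith
  have hD : 1 / ((1 + f ^ 2) * cos a ^ 2) - 1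
      = (1 - (1 + f ^ 2) * cos a ^ 2) / ((1 + f ^ 2) * cos a ^ 2) := by
    field_simp
  rw [tan_eq_sin_div_cos, div_pow, sin_sq, hD, div_div_eq_mul_div, div_div_eq_mul_div,
    div_add_div _ _ h1 h2, div_eq_one_iff_eq (mul_ne_zero h1 h2)]
  linear_combination h

theorem stmt_7_general (f a x y d₁ d₂ dF : ℝ)
    (ha' : a < π / 2)
    (hdF : 0 ≤ dF)
    (h₁ : Real.cos d₁ = ell (1, x, y) (1, f, 0) /
        Real.sqrt (ell (1, x, y) (1, x, y) * ell (1, f, 0) (1, f, 0)))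
    (h₂ : Real.cos d₂ = ell (1, x, y) (1, -f, 0) /
        Real.sqrt (ell (1, x, y) (1, x, y) * ell (1, -f, 0) (1, -f, 0)))
    (hF : Real.cos dF = ell (1, f, 0) (1, -f, 0) /
        Real.sqrt (ell (1, f, 0) (1, f, 0) * ell (1, -f, 0) (1, -f, 0)))
    (hsum : d₁ + d₂ = 2 * a) (ha : 2 * a > dF) :
    x ^ 2 / Real.tan a ^ 2 +
      y ^ 2 / (1 / ((1 + f ^ 2) * Real.cos a ^ 2) - 1) = 1 := by
  have ha0 : 0 < a := by linarith
  have hcos : cos a ≠ 0 := (cos_pos_of_mem_Ioo ⟨by linarith [pi_pos], ha'⟩).ne'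
  have hsin : sin a ≠ 0 := (sin_pos_of_pos_of_lt_pi ha0 (by linarith [pi_pos])).ne'
  have hlt := one_add_sq_mul_cos_sq_lt_one hdF (cos_focal_distance hF) (by linarith) ha
  have h₂' := cos_dist_eq_of_ell h₂
  rw [neg_sq, neg_mul, ← sub_eq_add_neg] at h₂'
  have hS : √((1 + x ^ 2 + y ^ 2) * (1 + f ^ 2)) ^ 2 = (1 + x ^ 2 + y ^ 2) * (1 + f ^ 2) :=
    sq_sqrt (by positivity)
  have hrel := sq_cos_mul_cos_sub_cos_add d₁ d₂
  rw [hsum, cos_two_mul, cos_dist_eq_of_ell h₁, h₂'] at hrel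
  exact ellipse_of_focal_cos_relation hcos hsin hlt (focal_cos_relation hS hrel)

/-- A point of the elliptic plane whose elliptic distances to the foci `F₁ = (1,f,0)`,
`F₂ = (1,-f,0)` sum to `2a` (with `2a` larger than the distance of the foci and `a < π/2`)
lies on the curve `x²/tan²a + y²/(1/((1+f²)cos²a) - 1) = 1`. -/
theorem stmt_7 (f a x y d₁ d₂ dF : ℝ)
    (hf : 0 < f) (ha' : a < π / 2)
    (hd₁ : 0 ≤ d₁) (hd₁' : d₁ ≤ π / 2) (hd₂ : 0 ≤ d₂) (hd₂' : d₂ ≤ π / 2)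
    (hdF : 0 ≤ dF) (hdF' : dF ≤ π / 2)
    (h₁ : Real.cos d₁ = ell (1, x, y) (1, f, 0) /
        Real.sqrt (ell (1, x, y) (1, x, y) * ell (1, f, 0) (1, f, 0)))
    (h₂ : Real.cos d₂ = ell (1, x, y) (1, -f, 0) /
        Real.sqrt (ell (1, x, y) (1, x, y) * ell (1, -f, 0) (1, -f, 0)))
    (hF : Real.cos dF = ell (1, f, 0) (1, -f, 0) /
        Real.sqrt (ell (1, f, 0) (1, f, 0) * ell (1, -f, 0) (1, -f, 0)))
    (hsum : d₁ + d₂ = 2 * a) (ha : 2 * a > dF) :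
    x ^ 2 / Real.tan a ^ 2 +
      y ^ 2 / (1 / ((1 + f ^ 2) * Real.cos a ^ 2) - 1) = 1 :=
  stmt_7_general f a x y d₁ d₂ dF ha' hdF h₁ h₂ hF hsum ha
end

section
/- In the projective model of the elliptic plane, let the elliptic parabola have focus F = (1,0,p), p > 0, and directrix the x-axis. A point X = (1,x,y) satisfies d(X,F) = d(X, x-axis) if and only if -x² + (1+py)²/(1+p²) = 1, where the distance to the x-axis is realized at the foot X' = (1,x,0). -/
open Real

/-- In the projective model of the elliptic plane, a point `X = (1,x,y)` is equidistant
from the focus `F = (1,0,p)` and the directrix (the `x`-axis, the distance being realized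
at the foot `X' = (1,x,0)`) if and only if `-x² + (1+py)²/(1+p²) = 1`. -/
theorem stmt_9 (p x y d₁ d₂ : ℝ)
    (hp : 0 < p)
    (hd₁ : 0 ≤ d₁) (hd₁' : d₁ ≤ π / 2) (hd₂ : 0 ≤ d₂) (hd₂' : d₂ ≤ π / 2)
    (h₁ : Real.cos d₁ = ell (1, x, y) (1, 0, p) /
        Real.sqrt (ell (1, x, y) (1, x, y) * ell (1, 0, p) (1, 0, p)))
    (h₂ : Real.cos d₂ = ell (1, x, y) (1, x, 0) /
        Real.sqrt (ell (1, x, y) (1, x, y) * ell (1, x, 0) (1, x, 0))) :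
    d₁ = d₂ ↔ -x ^ 2 + (1 + p * y) ^ 2 / (1 + p ^ 2) = 1 := by
  have hA : (0:ℝ) < 1 + x ^ 2 + y ^ 2 := by positivity
  have hB : (0:ℝ) < 1 + p ^ 2 := by positivity
  have hC : (0:ℝ) < 1 + x ^ 2 := by positivity
  have hpi := Real.pi_pos
  have h₁' : Real.cos d₁ = (1 + y * p) / Real.sqrt ((1 + x ^ 2 + y ^ 2) * (1 + p ^ 2)) := by
    rw [h₁]; simp only [ell]; ring_nf
  have h₂' : Real.cos d₂ = (1 + x ^ 2) / Real.sqrt ((1 + x ^ 2 + y ^ 2) * (1 + x ^ 2)) := by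
    rw [h₂]; simp only [ell]; ring_nf
  have hc1 : 0 ≤ Real.cos d₁ :=
    Real.cos_nonneg_of_mem_Icc ⟨by linarith, hd₁'⟩
  have hc2 : 0 ≤ Real.cos d₂ :=
    Real.cos_nonneg_of_mem_Icc ⟨by linarith, hd₂'⟩
  have hsq1 : Real.cos d₁ ^ 2 = (1 + y * p) ^ 2 / ((1 + x ^ 2 + y ^ 2) * (1 + p ^ 2)) := by
    rw [h₁', div_pow, Real.sq_sqrt (by positivity)]
  have hsq2 : Real.cos d₂ ^ 2 = (1 + x ^ 2) / (1 + x ^ 2 + y ^ 2) := by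
    rw [h₂', div_pow, Real.sq_sqrt (by positivity)]
    rw [div_eq_div_iff (by positivity) (by positivity)]
    ring
  have step1 : d₁ = d₂ ↔ Real.cos d₁ = Real.cos d₂ := by
    constructor
    · intro h; rw [h]
    · intro h
      exact Real.injOn_cos ⟨hd₁, by linarith⟩ ⟨hd₂, by linarith⟩ h
  have step2 : Real.cos d₁ = Real.cos d₂ ↔ Real.cos d₁ ^ 2 = Real.cos d₂ ^ 2 := by
    constructor
    · intro h; rw [h]
    · intro h; nlinarith [h, hc1, hc2]
  have step3 : Real.cos d₁ ^ 2 = Real.cos d₂ ^ 2 ↔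
      (1 + y * p) ^ 2 = (1 + p ^ 2) * (1 + x ^ 2) := by
    rw [hsq1, hsq2, div_eq_div_iff (by positivity) (by positivity)]
    constructor
    · intro h
      have h' : (1 + y * p) ^ 2 * (1 + x ^ 2 + y ^ 2) =
          ((1 + p ^ 2) * (1 + x ^ 2)) * (1 + x ^ 2 + y ^ 2) := by linear_combination h
      exact mul_right_cancel₀ (ne_of_gt hA) h'
    · intro h; linear_combination (1 + x ^ 2 + y ^ 2) * h
  rw [step1, step2, step3]
  constructor
  · intro h
    field_simp
    linear_combination h
  · intro h
    field_simp at h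
    linear_combination h
end

section
/- Let the Euclidean parabola have directrix the x-axis and focus (0,p), p > 0, i.e. the curve y = (x²+p²)/(2p). For a point K = (x,y) with y < 0 (below the directrix), the two tangent lines from K to the parabola meet at angle α satisfying cos α = -y/√((p-y)² + x²). -/
open Real

/-!
The tangent to the parabola at the point `P(t) = (t, (t² + p²)/(2p))` passes through `K = (x, y)`
iff `t² - 2xt + 2py - p² = 0`, so the two contact parameters satisfy `t₁ + t₂ = 2x` and
`t₁t₂ = 2py - p²`. In these terms `P(tᵢ) - K = ((tᵢ - tⱼ)/(2p)) • (p, tᵢ)`, the two scalars having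
opposite signs, so the cosine of the angle at `K` is `-(p² + t₁t₂)/(|(p, t₁)| |(p, t₂)|)`;
the same identities turn `-y/|K - (0, p)|` into this expression.
-/

theorem add_eq_and_mul_eq_of_quadratic_roots {R : Type*} [CommRing R] [IsDomain R]
    {s q t₁ t₂ : R} (ht : t₁ ≠ t₂) (h₁ : t₁ ^ 2 - s * t₁ + q = 0) (h₂ : t₂ ^ 2 - s * t₂ + q = 0) :
    t₁ + t₂ = s ∧ t₁ * t₂ = q := by
  have hfactor : (t₁ - t₂) * (t₁ + t₂ - s) = 0 := by linear_combination h₁ - h₂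
  have hsum : t₁ + t₂ = s :=
    sub_eq_zero.1 ((mul_eq_zero.1 hfactor).resolve_left (sub_ne_zero.2 ht))
  exact ⟨hsum, by linear_combination t₁ * hsum - h₁⟩

theorem div_sqrt_mul_sqrt_smul_of_mul_neg {s r : ℝ} (hsr : s * r < 0) (a b c d : ℝ) :
    (s * a * (r * c) + s * b * (r * d)) /
        (√((s * a) ^ 2 + (s * b) ^ 2) * √((r * c) ^ 2 + (r * d) ^ 2)) =
      -(a * c + b * d) / (√(a ^ 2 + b ^ 2) * √(c ^ 2 + d ^ 2)) := by
  have hsqrt (k u v : ℝ) : √((k * u) ^ 2 + (k * v) ^ 2) = |k| * √(u ^ 2 + v ^ 2) := by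
    rw [show (k * u) ^ 2 + (k * v) ^ 2 = k ^ 2 * (u ^ 2 + v ^ 2) by ring,
      sqrt_mul (sq_nonneg k), sqrt_sq_eq_abs]
  have habs : |s| * |r| = -(s * r) := by rw [← abs_mul, abs_of_neg hsr]
  rw [hsqrt, hsqrt,
    show s * a * (r * c) + s * b * (r * d) = -(s * r) * -(a * c + b * d) by ring,
    show |s| * √(a ^ 2 + b ^ 2) * (|r| * √(c ^ 2 + d ^ 2)) =
      -(s * r) * (√(a ^ 2 + b ^ 2) * √(c ^ 2 + d ^ 2)) by rw [← habs]; ring,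
    mul_div_mul_left _ _ (neg_ne_zero.2 hsr.ne)]

section Parabola

variable {p x y : ℝ}

theorem parabola_tangent_through_iff (hp : p ≠ 0) {t : ℝ} :
    (t ^ 2 + p ^ 2) / (2 * p) + (t / p) * (x - t) = y ↔
      t ^ 2 - 2 * x * t + (2 * p * y - p ^ 2) = 0 := by
  have hdiff : (t ^ 2 + p ^ 2) / (2 * p) + (t / p) * (x - t) - y =
      -(t ^ 2 - 2 * x * t + (2 * p * y - p ^ 2)) / (2 * p) := by
    field_simp
    ring
  rw [← sub_eq_zero, hdiff, div_eq_zero_iff, neg_eq_zero, or_iff_left (by positivity)]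

variable {t₁ t₂ : ℝ}

theorem parabola_sub_pole_eq_smul (hp : p ≠ 0) (hsum : t₁ + t₂ = 2 * x)
    (hprod : t₁ * t₂ = 2 * p * y - p ^ 2) :
    t₁ - x = (t₁ - t₂) / (2 * p) * p ∧
      (t₁ ^ 2 + p ^ 2) / (2 * p) - y = (t₁ - t₂) / (2 * p) * t₁ := by
  have hy : y = (t₁ * t₂ + p ^ 2) / (2 * p) := by
    field_simp
    linear_combination -hprod
  constructor
  · field_simp
    linear_combination hsum
  · rw [hy]
    field_simp
    ring

theorem neg_div_dist_focus_eq (hp : 0 < p) (hsum : t₁ + t₂ = 2 * x)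
    (hprod : t₁ * t₂ = 2 * p * y - p ^ 2) :
    -y / √((p - y) ^ 2 + x ^ 2) =
      -(p * p + t₁ * t₂) / (√(p ^ 2 + t₁ ^ 2) * √(p ^ 2 + t₂ ^ 2)) := by
  have hy : y = (p * p + t₁ * t₂) / (2 * p) := by
    field_simp
    linear_combination -hprod
  have hdist : (p - y) ^ 2 + x ^ 2 = (p ^ 2 + t₁ ^ 2) * (p ^ 2 + t₂ ^ 2) / (2 * p) ^ 2 := by
    rw [hy, show x = (t₁ + t₂) / 2 by linarith]
    field_simp
    ring
  rw [hdist, sqrt_div' _ (by positivity), sqrt_sq (by positivity), sqrt_mul (by positivity), hy,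
    ← neg_div, div_div_div_cancel_right₀ (by positivity)]

end Parabola

theorem stmt_10_general (p x y t₁ t₂ α : ℝ)
    (hp : 0 < p) (ht : t₁ ≠ t₂)
    (htan₁ : (t₁ ^ 2 + p ^ 2) / (2 * p) + (t₁ / p) * (x - t₁) = y)
    (htan₂ : (t₂ ^ 2 + p ^ 2) / (2 * p) + (t₂ / p) * (x - t₂) = y)
    (hα : Real.cos α =
      ((t₁ - x) * (t₂ - x) +
        ((t₁ ^ 2 + p ^ 2) / (2 * p) - y) * ((t₂ ^ 2 + p ^ 2) / (2 * p) - y)) /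
      (Real.sqrt ((t₁ - x) ^ 2 + ((t₁ ^ 2 + p ^ 2) / (2 * p) - y) ^ 2) *
        Real.sqrt ((t₂ - x) ^ 2 + ((t₂ ^ 2 + p ^ 2) / (2 * p) - y) ^ 2))) :
    Real.cos α = -y / Real.sqrt ((p - y) ^ 2 + x ^ 2) := by
  obtain ⟨hsum, hprod⟩ := add_eq_and_mul_eq_of_quadratic_roots ht
    ((parabola_tangent_through_iff hp.ne').1 htan₁) ((parabola_tangent_through_iff hp.ne').1 htan₂)
  obtain ⟨hx₁, hy₁⟩ := parabola_sub_pole_eq_smul hp.ne' hsum hprod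
  obtain ⟨hx₂, hy₂⟩ := parabola_sub_pole_eq_smul (t₂ := t₁) hp.ne' (by rwa [add_comm])
    (by rwa [mul_comm])
  have hopposite : (t₁ - t₂) / (2 * p) * ((t₂ - t₁) / (2 * p)) < 0 := by
    have hne : (t₁ - t₂) / (2 * p) ≠ 0 := div_ne_zero (sub_ne_zero.2 ht) (by positivity)
    rw [show (t₂ - t₁) / (2 * p) = -((t₁ - t₂) / (2 * p)) by ring, mul_neg, neg_lt_zero]
    exact mul_self_pos.2 hne
  rw [hα, hx₁, hy₁, hx₂, hy₂, div_sqrt_mul_sqrt_smul_of_mul_neg hopposite,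
    neg_div_dist_focus_eq hp hsum hprod]

/-- For the Euclidean parabola `y = (x²+p²)/(2p)` (focus `(0,p)`, directrix the `x`-axis)
and a point `K = (x,y)` with `y < 0`, the angle `α` under which the parabola is seen from
`K` (the angle at `K` between the two tangent lines, touching at parameters `t₁ ≠ t₂`)
satisfies `cos α = -y/√((p-y)² + x²)`. -/
theorem stmt_10 (p x y t₁ t₂ α : ℝ)
    (hp : 0 < p) (hy : y < 0) (ht : t₁ ≠ t₂)
    (htan₁ : (t₁ ^ 2 + p ^ 2) / (2 * p) + (t₁ / p) * (x - t₁) = y)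
    (htan₂ : (t₂ ^ 2 + p ^ 2) / (2 * p) + (t₂ / p) * (x - t₂) = y)
    (hα : Real.cos α =
      ((t₁ - x) * (t₂ - x) +
        ((t₁ ^ 2 + p ^ 2) / (2 * p) - y) * ((t₂ ^ 2 + p ^ 2) / (2 * p) - y)) /
      (Real.sqrt ((t₁ - x) ^ 2 + ((t₁ ^ 2 + p ^ 2) / (2 * p) - y) ^ 2) *
        Real.sqrt ((t₂ - x) ^ 2 + ((t₂ ^ 2 + p ^ 2) / (2 * p) - y) ^ 2))) :
    Real.cos α = -y / Real.sqrt ((p - y) ^ 2 + x ^ 2) :=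
  stmt_10_general p x y t₁ t₂ α hp ht htan₁ htan₂ hα
end

section
/- Let E be the Euclidean ellipse x²/a² + y²/b² = 1 with a,b > 0, and let K = (x,y) be a point outside E (x²/a² + y²/b² > 1). The two tangent lines from K to E meet at an angle α satisfying cos α = -(a² + b² - x² - y²)/√((-a² + b² + x²)² + 2y²(a² - b² + x²) + y⁴). -/
open Real

set_option maxHeartbeats 1000000

/-- For the Euclidean ellipse `x²/a² + y²/b² = 1` and an external point `K = (x,y)`,
the angle `α` at `K` between the two tangent lines (touching the ellipse at the distinct
points `(x₁,y₁)`, `(x₂,y₂)`) satisfies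
`cos α = -(a²+b²-x²-y²)/√((-a²+b²+x²)² + 2y²(a²-b²+x²) + y⁴)`. -/
theorem stmt_11 (a b x y x₁ y₁ x₂ y₂ α : ℝ)
    (ha : 0 < a) (hb : 0 < b)
    (hK : x ^ 2 / a ^ 2 + y ^ 2 / b ^ 2 > 1)
    (hne : (x₁, y₁) ≠ (x₂, y₂))
    (hon₁ : x₁ ^ 2 / a ^ 2 + y₁ ^ 2 / b ^ 2 = 1)
    (hon₂ : x₂ ^ 2 / a ^ 2 + y₂ ^ 2 / b ^ 2 = 1)
    (htan₁ : x * x₁ / a ^ 2 + y * y₁ / b ^ 2 = 1)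
    (htan₂ : x * x₂ / a ^ 2 + y * y₂ / b ^ 2 = 1)
    (hα : Real.cos α =
      ((x₁ - x) * (x₂ - x) + (y₁ - y) * (y₂ - y)) /
      (Real.sqrt ((x₁ - x) ^ 2 + (y₁ - y) ^ 2) *
        Real.sqrt ((x₂ - x) ^ 2 + (y₂ - y) ^ 2))) :
    Real.cos α = -(a ^ 2 + b ^ 2 - x ^ 2 - y ^ 2) /
      Real.sqrt ((-a ^ 2 + b ^ 2 + x ^ 2) ^ 2 +
        2 * y ^ 2 * (a ^ 2 - b ^ 2 + x ^ 2) + y ^ 4) := by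
  have ha' : a ≠ 0 := ha.ne'
  have hb' : b ≠ 0 := hb.ne'
  have ha2 : (0:ℝ) < a ^ 2 := by positivity
  have hb2 : (0:ℝ) < b ^ 2 := by positivity
  -- cleared-denominator hypotheses
  have hE1 : b ^ 2 * x₁ ^ 2 + a ^ 2 * y₁ ^ 2 = a ^ 2 * b ^ 2 := by
    have h := hon₁; field_simp at h; linear_combination h
  have hE2 : b ^ 2 * x₂ ^ 2 + a ^ 2 * y₂ ^ 2 = a ^ 2 * b ^ 2 := by
    have h := hon₂; field_simp at h; linear_combination h
  have hT1 : b ^ 2 * (x * x₁) + a ^ 2 * (y * y₁) = a ^ 2 * b ^ 2 := by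
    have h := htan₁; field_simp at h; linear_combination h
  have hT2 : b ^ 2 * (x * x₂) + a ^ 2 * (y * y₂) = a ^ 2 * b ^ 2 := by
    have h := htan₂; field_simp at h; linear_combination h
  have hKc : a ^ 2 * b ^ 2 < b ^ 2 * x ^ 2 + a ^ 2 * y ^ 2 := by
    have h2 : (x ^ 2 / a ^ 2 + y ^ 2 / b ^ 2) * (a ^ 2 * b ^ 2)
        = b ^ 2 * x ^ 2 + a ^ 2 * y ^ 2 := by field_simp
    have h3 := mul_lt_mul_of_pos_right hK (mul_pos ha2 hb2)
    rw [one_mul, h2] at h3; linarith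
  have he : 0 < b ^ 2 * x ^ 2 + a ^ 2 * y ^ 2 - a ^ 2 * b ^ 2 := by linarith
  have hw : 0 < b ^ 2 * x ^ 2 + a ^ 2 * y ^ 2 := by
    linarith [mul_pos ha2 hb2]
  have hw' : b ^ 2 * x ^ 2 + a ^ 2 * y ^ 2 ≠ 0 := hw.ne'
  -- distinctness
  have hd : x₁ ≠ x₂ ∨ y₁ ≠ y₂ := by
    by_contra h; push_neg at h; exact hne (by rw [h.1, h.2])
  have hA : b ^ 2 * x * (x₁ - x₂) + a ^ 2 * y * (y₁ - y₂) = 0 := by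
    linear_combination hT1 - hT2
  have hB : b ^ 2 * (x₁ + x₂) * (x₁ - x₂) + a ^ 2 * (y₁ + y₂) * (y₁ - y₂) = 0 := by
    linear_combination hE1 - hE2
  -- parallelism: x*(y₁+y₂) = y*(x₁+x₂)
  have hxv : x * (y₁ + y₂) = y * (x₁ + x₂) := by
    rcases hd with h | h
    · have h1 : b ^ 2 * (x₁ - x₂) * (x * (y₁ + y₂) - y * (x₁ + x₂)) = 0 := by
        linear_combination (y₁ + y₂) * hA - y * hB
      have h2 : b ^ 2 * (x₁ - x₂) ≠ 0 := mul_ne_zero hb2.ne' (sub_ne_zero.mpr h)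
      have := (mul_eq_zero.mp h1).resolve_left h2
      linarith
    · have h1 : a ^ 2 * (y₁ - y₂) * (x * (y₁ + y₂) - y * (x₁ + x₂)) = 0 := by
        linear_combination x * hB - (x₁ + x₂) * hA
      have h2 : a ^ 2 * (y₁ - y₂) ≠ 0 := mul_ne_zero ha2.ne' (sub_ne_zero.mpr h)
      have := (mul_eq_zero.mp h1).resolve_left h2
      linarith
  -- symmetric function values
  have hS1 : (b ^ 2 * x ^ 2 + a ^ 2 * y ^ 2) * (x₁ + x₂) = 2 * a ^ 2 * b ^ 2 * x := by
    linear_combination x * hT1 + x * hT2 - a ^ 2 * y * hxv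
  have hS2 : (b ^ 2 * x ^ 2 + a ^ 2 * y ^ 2) * (y₁ + y₂) = 2 * a ^ 2 * b ^ 2 * y := by
    linear_combination y * hT1 + y * hT2 + b ^ 2 * x * hxv
  -- each xᵢ (resp. yᵢ) satisfies an explicit quadratic
  have hq1 : (b ^ 2 * x ^ 2 + a ^ 2 * y ^ 2) * x₁ ^ 2 - 2 * a ^ 2 * b ^ 2 * (x * x₁)
      + a ^ 4 * (b ^ 2 - y ^ 2) = 0 := by
    have h : b ^ 2 * ((b ^ 2 * x ^ 2 + a ^ 2 * y ^ 2) * x₁ ^ 2 - 2 * a ^ 2 * b ^ 2 * (x * x₁)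
        + a ^ 4 * (b ^ 2 - y ^ 2)) = 0 := by
      linear_combination (b ^ 2 * (x * x₁) - a ^ 2 * (y * y₁) - a ^ 2 * b ^ 2) * hT1
        + a ^ 2 * y ^ 2 * hE1
    exact (mul_eq_zero.mp h).resolve_left hb2.ne'
  have hq2 : (b ^ 2 * x ^ 2 + a ^ 2 * y ^ 2) * x₂ ^ 2 - 2 * a ^ 2 * b ^ 2 * (x * x₂)
      + a ^ 4 * (b ^ 2 - y ^ 2) = 0 := by
    have h : b ^ 2 * ((b ^ 2 * x ^ 2 + a ^ 2 * y ^ 2) * x₂ ^ 2 - 2 * a ^ 2 * b ^ 2 * (x * x₂)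
        + a ^ 4 * (b ^ 2 - y ^ 2)) = 0 := by
      linear_combination (b ^ 2 * (x * x₂) - a ^ 2 * (y * y₂) - a ^ 2 * b ^ 2) * hT2
        + a ^ 2 * y ^ 2 * hE2
    exact (mul_eq_zero.mp h).resolve_left hb2.ne'
  have hr1 : (b ^ 2 * x ^ 2 + a ^ 2 * y ^ 2) * y₁ ^ 2 - 2 * a ^ 2 * b ^ 2 * (y * y₁)
      + b ^ 4 * (a ^ 2 - x ^ 2) = 0 := by
    have h : a ^ 2 * ((b ^ 2 * x ^ 2 + a ^ 2 * y ^ 2) * y₁ ^ 2 - 2 * a ^ 2 * b ^ 2 * (y * y₁)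
        + b ^ 4 * (a ^ 2 - x ^ 2)) = 0 := by
      linear_combination (a ^ 2 * (y * y₁) - b ^ 2 * (x * x₁) - a ^ 2 * b ^ 2) * hT1
        + b ^ 2 * x ^ 2 * hE1
    exact (mul_eq_zero.mp h).resolve_left ha2.ne'
  have hr2 : (b ^ 2 * x ^ 2 + a ^ 2 * y ^ 2) * y₂ ^ 2 - 2 * a ^ 2 * b ^ 2 * (y * y₂)
      + b ^ 4 * (a ^ 2 - x ^ 2) = 0 := by
    have h : a ^ 2 * ((b ^ 2 * x ^ 2 + a ^ 2 * y ^ 2) * y₂ ^ 2 - 2 * a ^ 2 * b ^ 2 * (y * y₂)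
        + b ^ 4 * (a ^ 2 - x ^ 2)) = 0 := by
      linear_combination (a ^ 2 * (y * y₂) - b ^ 2 * (x * x₂) - a ^ 2 * b ^ 2) * hT2
        + b ^ 2 * x ^ 2 * hE2
    exact (mul_eq_zero.mp h).resolve_left ha2.ne'
  have hS3 : (b ^ 2 * x ^ 2 + a ^ 2 * y ^ 2) * (x₁ * x₂) = a ^ 4 * (b ^ 2 - y ^ 2) := by
    have h : 2 * (b ^ 2 * x ^ 2 + a ^ 2 * y ^ 2) *
        ((b ^ 2 * x ^ 2 + a ^ 2 * y ^ 2) * (x₁ * x₂) - a ^ 4 * (b ^ 2 - y ^ 2)) = 0 := by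
      linear_combination (-(b ^ 2 * x ^ 2 + a ^ 2 * y ^ 2)) * hq1
        + (-(b ^ 2 * x ^ 2 + a ^ 2 * y ^ 2)) * hq2
        + ((b ^ 2 * x ^ 2 + a ^ 2 * y ^ 2) * (x₁ + x₂)) * hS1
    have h2 : (2:ℝ) * (b ^ 2 * x ^ 2 + a ^ 2 * y ^ 2) ≠ 0 := by positivity
    have := (mul_eq_zero.mp h).resolve_left h2
    linarith
  have hS4 : (b ^ 2 * x ^ 2 + a ^ 2 * y ^ 2) * (y₁ * y₂) = b ^ 4 * (a ^ 2 - x ^ 2) := by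
    have h : 2 * (b ^ 2 * x ^ 2 + a ^ 2 * y ^ 2) *
        ((b ^ 2 * x ^ 2 + a ^ 2 * y ^ 2) * (y₁ * y₂) - b ^ 4 * (a ^ 2 - x ^ 2)) = 0 := by
      linear_combination (-(b ^ 2 * x ^ 2 + a ^ 2 * y ^ 2)) * hr1
        + (-(b ^ 2 * x ^ 2 + a ^ 2 * y ^ 2)) * hr2
        + ((b ^ 2 * x ^ 2 + a ^ 2 * y ^ 2) * (y₁ + y₂)) * hS2
    have h2 : (2:ℝ) * (b ^ 2 * x ^ 2 + a ^ 2 * y ^ 2) ≠ 0 := by positivity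
    have := (mul_eq_zero.mp h).resolve_left h2
    linarith
  have hxy0 : x ≠ 0 ∨ y ≠ 0 := by
    by_contra h; push_neg at h
    rw [h.1, h.2] at hK; norm_num at hK
  have hS5 : (b ^ 2 * x ^ 2 + a ^ 2 * y ^ 2) * (x₁ * y₂ + x₂ * y₁)
      = 2 * a ^ 2 * b ^ 2 * (x * y) := by
    rcases hxy0 with h | h
    · have h1 : b ^ 2 * x * ((b ^ 2 * x ^ 2 + a ^ 2 * y ^ 2) * (x₁ * y₂ + x₂ * y₁)
          - 2 * a ^ 2 * b ^ 2 * (x * y)) = 0 := by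
        linear_combination (b ^ 2 * x ^ 2 + a ^ 2 * y ^ 2) * y₂ * hT1
          + (b ^ 2 * x ^ 2 + a ^ 2 * y ^ 2) * y₁ * hT2
          + a ^ 2 * b ^ 2 * hS2 - 2 * a ^ 2 * y * hS4
      have h2 : b ^ 2 * x ≠ 0 := mul_ne_zero hb2.ne' h
      have := (mul_eq_zero.mp h1).resolve_left h2
      linarith
    · have h1 : a ^ 2 * y * ((b ^ 2 * x ^ 2 + a ^ 2 * y ^ 2) * (x₁ * y₂ + x₂ * y₁)
          - 2 * a ^ 2 * b ^ 2 * (x * y)) = 0 := by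
        linear_combination (b ^ 2 * x ^ 2 + a ^ 2 * y ^ 2) * x₂ * hT1
          + (b ^ 2 * x ^ 2 + a ^ 2 * y ^ 2) * x₁ * hT2
          + a ^ 2 * b ^ 2 * hS1 - 2 * b ^ 2 * x * hS3
      have h2 : a ^ 2 * y ≠ 0 := mul_ne_zero ha2.ne' h
      have := (mul_eq_zero.mp h1).resolve_left h2
      linarith
  -- main scalar identities
  have hD : (b ^ 2 * x ^ 2 + a ^ 2 * y ^ 2) * ((x₁ - x) * (x₂ - x) + (y₁ - y) * (y₂ - y))
      = (x ^ 2 + y ^ 2 - a ^ 2 - b ^ 2) * (b ^ 2 * x ^ 2 + a ^ 2 * y ^ 2 - a ^ 2 * b ^ 2) := by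
    linear_combination hS3 + hS4 - x * hS1 - y * hS2
  have hG : (b ^ 2 * x ^ 2 + a ^ 2 * y ^ 2) * ((x₁ - x) * (x₂ - x) - (y₁ - y) * (y₂ - y))
      = a ^ 4 * b ^ 2 - a ^ 4 * y ^ 2 - 2 * a ^ 2 * b ^ 2 * x ^ 2 - a ^ 2 * b ^ 4
        + b ^ 4 * x ^ 2 + 2 * a ^ 2 * b ^ 2 * y ^ 2 + b ^ 2 * x ^ 4
        + a ^ 2 * x ^ 2 * y ^ 2 - b ^ 2 * x ^ 2 * y ^ 2 - a ^ 2 * y ^ 4 := by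
    linear_combination hS3 - hS4 - x * hS1 + y * hS2
  have hCr : (b ^ 2 * x ^ 2 + a ^ 2 * y ^ 2) * ((x₁ - x) * (y₂ - y) + (x₂ - x) * (y₁ - y))
      = 2 * x * y * (b ^ 2 * x ^ 2 + a ^ 2 * y ^ 2 - a ^ 2 * b ^ 2) := by
    linear_combination hS5 - x * hS2 - y * hS1
  have hPP : (b ^ 2 * x ^ 2 + a ^ 2 * y ^ 2) ^ 2 *
      (((x₁ - x) ^ 2 + (y₁ - y) ^ 2) * ((x₂ - x) ^ 2 + (y₂ - y) ^ 2))
      = (b ^ 2 * x ^ 2 + a ^ 2 * y ^ 2 - a ^ 2 * b ^ 2) ^ 2 *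
        ((-a ^ 2 + b ^ 2 + x ^ 2) ^ 2 + 2 * y ^ 2 * (a ^ 2 - b ^ 2 + x ^ 2) + y ^ 4) := by
    have key : (b ^ 2 * x ^ 2 + a ^ 2 * y ^ 2) ^ 2 *
        (((x₁ - x) ^ 2 + (y₁ - y) ^ 2) * ((x₂ - x) ^ 2 + (y₂ - y) ^ 2))
        = ((b ^ 2 * x ^ 2 + a ^ 2 * y ^ 2) * ((x₁ - x) * (x₂ - x) - (y₁ - y) * (y₂ - y))) ^ 2
        + ((b ^ 2 * x ^ 2 + a ^ 2 * y ^ 2) * ((x₁ - x) * (y₂ - y) + (x₂ - x) * (y₁ - y))) ^ 2 := by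
      ring
    rw [key, hG, hCr]; ring
  -- positivity of the squared distances
  have hP1 : 0 < (x₁ - x) ^ 2 + (y₁ - y) ^ 2 := by
    rcases eq_or_ne x₁ x with hx | hx
    · rcases eq_or_ne y₁ y with hy | hy
      · exfalso; rw [hx, hy] at hon₁; linarith
      · linarith [sq_nonneg (x₁ - x), sq_pos_of_ne_zero (sub_ne_zero.mpr hy)]
    · linarith [sq_nonneg (y₁ - y), sq_pos_of_ne_zero (sub_ne_zero.mpr hx)]
  have hP2 : 0 < (x₂ - x) ^ 2 + (y₂ - y) ^ 2 := by
    rcases eq_or_ne x₂ x with hx | hx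
    · rcases eq_or_ne y₂ y with hy | hy
      · exfalso; rw [hx, hy] at hon₂; linarith
      · linarith [sq_nonneg (x₂ - x), sq_pos_of_ne_zero (sub_ne_zero.mpr hy)]
    · linarith [sq_nonneg (y₂ - y), sq_pos_of_ne_zero (sub_ne_zero.mpr hx)]
  have hR : 0 < (-a ^ 2 + b ^ 2 + x ^ 2) ^ 2 + 2 * y ^ 2 * (a ^ 2 - b ^ 2 + x ^ 2) + y ^ 4 := by
    have h0 : 0 < (b ^ 2 * x ^ 2 + a ^ 2 * y ^ 2) ^ 2 *
        (((x₁ - x) ^ 2 + (y₁ - y) ^ 2) * ((x₂ - x) ^ 2 + (y₂ - y) ^ 2)) :=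
      mul_pos (by positivity) (mul_pos hP1 hP2)
    rw [hPP] at h0
    by_contra h; push_neg at h
    have h2 := mul_nonpos_of_nonneg_of_nonpos
      (sq_nonneg (b ^ 2 * x ^ 2 + a ^ 2 * y ^ 2 - a ^ 2 * b ^ 2)) h
    linarith
  -- finish
  have hsR : 0 < Real.sqrt ((-a ^ 2 + b ^ 2 + x ^ 2) ^ 2 +
      2 * y ^ 2 * (a ^ 2 - b ^ 2 + x ^ 2) + y ^ 4) := Real.sqrt_pos.mpr hR
  have hprod : Real.sqrt ((x₁ - x) ^ 2 + (y₁ - y) ^ 2) * Real.sqrt ((x₂ - x) ^ 2 + (y₂ - y) ^ 2)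
      = ((b ^ 2 * x ^ 2 + a ^ 2 * y ^ 2 - a ^ 2 * b ^ 2) / (b ^ 2 * x ^ 2 + a ^ 2 * y ^ 2)) *
        Real.sqrt ((-a ^ 2 + b ^ 2 + x ^ 2) ^ 2 +
          2 * y ^ 2 * (a ^ 2 - b ^ 2 + x ^ 2) + y ^ 4) := by
    rw [← Real.sqrt_mul hP1.le]
    have h1 : ((x₁ - x) ^ 2 + (y₁ - y) ^ 2) * ((x₂ - x) ^ 2 + (y₂ - y) ^ 2)
        = ((b ^ 2 * x ^ 2 + a ^ 2 * y ^ 2 - a ^ 2 * b ^ 2) / (b ^ 2 * x ^ 2 + a ^ 2 * y ^ 2)) ^ 2 *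
          ((-a ^ 2 + b ^ 2 + x ^ 2) ^ 2 + 2 * y ^ 2 * (a ^ 2 - b ^ 2 + x ^ 2) + y ^ 4) := by
      rw [div_pow, div_mul_eq_mul_div, eq_div_iff (by positivity)]
      linarith [hPP]
    rw [h1, Real.sqrt_mul (sq_nonneg _), Real.sqrt_sq (by positivity :
      (0:ℝ) ≤ (b ^ 2 * x ^ 2 + a ^ 2 * y ^ 2 - a ^ 2 * b ^ 2) / (b ^ 2 * x ^ 2 + a ^ 2 * y ^ 2))]
  have hDval : (x₁ - x) * (x₂ - x) + (y₁ - y) * (y₂ - y)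
      = (x ^ 2 + y ^ 2 - a ^ 2 - b ^ 2) * (b ^ 2 * x ^ 2 + a ^ 2 * y ^ 2 - a ^ 2 * b ^ 2)
        / (b ^ 2 * x ^ 2 + a ^ 2 * y ^ 2) := by
    rw [eq_div_iff hw']
    linarith [hD]
  rw [hα, hprod, hDval]
  rw [div_eq_div_iff (mul_pos (div_pos he hw) hsR).ne' hsR.ne']
  ring
end

section
/- Let H be the Euclidean hyperbola x²/a² - y²/b² = 1 with a,b > 0, and let K = (x,y) be a point from which two distinct tangent lines to H exist, meeting at angle α. Then cos²α = (-a² + b² + x² + y²)²/((a² + b² - x²)² + 2y²(a² + b² + x²) + y⁴). -/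
open Real

set_option maxHeartbeats 1600000

/-- For the Euclidean hyperbola `x²/a² - y²/b² = 1` and a point `K = (x,y)` admitting two
distinct tangent lines (touching at `(x₁,y₁) ≠ (x₂,y₂)`) meeting at angle `α`, one has
`cos²α = (-a²+b²+x²+y²)²/((a²+b²-x²)² + 2y²(a²+b²+x²) + y⁴)`. -/
theorem stmt_12 (a b x y x₁ y₁ x₂ y₂ α : ℝ)
    (ha : 0 < a) (hb : 0 < b)
    (hne : (x₁, y₁) ≠ (x₂, y₂))
    (hon₁ : x₁ ^ 2 / a ^ 2 - y₁ ^ 2 / b ^ 2 = 1)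
    (hon₂ : x₂ ^ 2 / a ^ 2 - y₂ ^ 2 / b ^ 2 = 1)
    (htan₁ : x * x₁ / a ^ 2 - y * y₁ / b ^ 2 = 1)
    (htan₂ : x * x₂ / a ^ 2 - y * y₂ / b ^ 2 = 1)
    (hα : Real.cos α =
      ((x₁ - x) * (x₂ - x) + (y₁ - y) * (y₂ - y)) /
      (Real.sqrt ((x₁ - x) ^ 2 + (y₁ - y) ^ 2) *
        Real.sqrt ((x₂ - x) ^ 2 + (y₂ - y) ^ 2))) :
    Real.cos α ^ 2 = (-a ^ 2 + b ^ 2 + x ^ 2 + y ^ 2) ^ 2 /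
      ((a ^ 2 + b ^ 2 - x ^ 2) ^ 2 + 2 * y ^ 2 * (a ^ 2 + b ^ 2 + x ^ 2) + y ^ 4) := by
  have ha2 : (a:ℝ)^2 ≠ 0 := by positivity
  have hb2 : (b:ℝ)^2 ≠ 0 := by positivity
  have Hon1 : b^2*x₁^2 - a^2*y₁^2 = a^2*b^2 := by
    field_simp at hon₁; linear_combination hon₁
  have Hon2 : b^2*x₂^2 - a^2*y₂^2 = a^2*b^2 := by
    field_simp at hon₂; linear_combination hon₂
  have Htan1 : b^2*(x*x₁) - a^2*(y*y₁) = a^2*b^2 := by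
    field_simp at htan₁; linear_combination htan₁
  have Htan2 : b^2*(x*x₂) - a^2*(y*y₂) = a^2*b^2 := by
    field_simp at htan₂; linear_combination htan₂
  by_cases hy : y = 0
  · -- degenerate case y = 0
    subst hy
    have hx0 : x ≠ 0 := by
      intro h
      rw [h] at Htan1
      simp at Htan1
      rcases Htan1 with h' | h'
      · exact ha.ne' h'
      · exact hb.ne' h'
    have hx1 : x*x₁ = a^2 := by
      refine mul_left_cancel₀ hb2 ?_
      linear_combination Htan1
    have hx2 : x*x₂ = a^2 := by
      refine mul_left_cancel₀ hb2 ?_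
      linear_combination Htan2
    have heq : x₂ = x₁ := mul_left_cancel₀ hx0 (hx2.trans hx1.symm)
    subst heq
    have hy12 : y₁ ≠ y₂ := fun h => hne (by rw [h])
    have hyy : (y₁ - y₂)*(y₁ + y₂) = 0 := by
      refine mul_left_cancel₀ ha2 ?_
      linear_combination Hon2 - Hon1
    have hy2v : y₂ = -y₁ := by
      rcases mul_eq_zero.mp hyy with h | h
      · exact absurd (by linarith) hy12
      · linarith
    subst hy2v
    have hy1n : y₁ ≠ 0 := by
      intro h
      exact hne (by rw [h]; norm_num)
    have hxy : x^2*y₁^2 = b^2*(a^2 - x^2) := by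
      refine mul_left_cancel₀ ha2 ?_
      linear_combination (-x^2)*Hon1 + (b^2*(x*x₂+a^2))*hx1
    have hy1sq : 0 < y₁^2 := lt_of_le_of_ne (sq_nonneg y₁) (Ne.symm (pow_ne_zero 2 hy1n))
    have hxsq : 0 < x^2 := lt_of_le_of_ne (sq_nonneg x) (Ne.symm (pow_ne_zero 2 hx0))
    have hax : 0 < a^2 - x^2 := by nlinarith [mul_pos hxsq hy1sq, pow_pos hb 2]
    have habx : 0 < a^2 + b^2 - x^2 := by nlinarith [pow_pos hb 2]
    have hden : ((a^2+b^2-x^2)^2 + 2*(0:ℝ)^2*(a^2+b^2+x^2) + (0:ℝ)^4) ≠ 0 := by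
      have := mul_pos habx habx
      nlinarith
    have hD1 : 0 < (x₂-x)^2 + (y₁-(0:ℝ))^2 := by
      linarith [sq_nonneg (x₂-x), hy1sq, (by ring : (y₁-(0:ℝ))^2 = y₁^2)]
    have hD2 : 0 < (x₂-x)^2 + (-y₁-(0:ℝ))^2 := by
      linarith [sq_nonneg (x₂-x), hy1sq, (by ring : (-y₁-(0:ℝ))^2 = y₁^2)]
    have hkey2 : x^2*(((x₂-x)*(x₂-x) + (y₁-0)*(-y₁-0)) * (a^2+b^2-x^2))
        = x^2*(-(-a^2+b^2+x^2+(0:ℝ)^2) * ((x₂-x)^2+(y₁-0)^2)) := by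
      linear_combination (2*b^2*(x*x₂ + a^2 - 2*x^2))*hx1 + (-2*(a^2-x^2))*hxy
    have hkey := mul_left_cancel₀ (pow_ne_zero 2 hx0) hkey2
    rw [hα, div_pow, mul_pow, Real.sq_sqrt hD1.le, Real.sq_sqrt hD2.le,
      div_eq_div_iff (ne_of_gt (mul_pos hD1 hD2)) hden]
    linear_combination (((x₂-x)*(x₂-x) + (y₁-0)*(-y₁-0))*(a^2+b^2-x^2)
      - (-a^2+b^2+x^2+(0:ℝ)^2)*((x₂-x)^2+(y₁-0)^2))*hkey
  · -- main case y ≠ 0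
    have hy1 : a^2*y*y₁ = b^2*x*x₁ - a^2*b^2 := by linear_combination -Htan1
    have hy2 : a^2*y*y₂ = b^2*x*x₂ - a^2*b^2 := by linear_combination -Htan2
    have hq1 : (a^2*y^2 - b^2*x^2)*x₁^2 + 2*a^2*b^2*x*x₁ - a^4*(b^2+y^2) = 0 := by
      refine mul_left_cancel₀ hb2 ?_
      linear_combination (a^2*y^2)*Hon1 + (a^2*y*y₁ + b^2*x*x₁ - a^2*b^2)*hy1
    have hq2 : (a^2*y^2 - b^2*x^2)*x₂^2 + 2*a^2*b^2*x*x₂ - a^4*(b^2+y^2) = 0 := by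
      refine mul_left_cancel₀ hb2 ?_
      linear_combination (a^2*y^2)*Hon2 + (a^2*y*y₂ + b^2*x*x₂ - a^2*b^2)*hy2
    have hay : a^2*y ≠ 0 := mul_ne_zero ha2 hy
    have hx12 : x₁ ≠ x₂ := by
      intro h
      have h2 : a^2*y*y₁ = a^2*y*y₂ := by rw [hy1, hy2, h]
      exact hne (by rw [h, mul_left_cancel₀ hay h2])
    have hsub : x₁ - x₂ ≠ 0 := sub_ne_zero.2 hx12
    have hs : (a^2*y^2 - b^2*x^2)*(x₁+x₂) = -(2*a^2*b^2*x) := by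
      have h : ((a^2*y^2 - b^2*x^2)*(x₁+x₂) + 2*a^2*b^2*x) * (x₁ - x₂) = 0 := by
        linear_combination hq1 - hq2
      rcases mul_eq_zero.mp h with h' | h'
      · linarith
      · exact absurd h' hsub
    have hp : (a^2*y^2 - b^2*x^2)*(x₁*x₂) = -(a^4*(b^2+y^2)) := by
      have h : ((a^2*y^2 - b^2*x^2)*(x₁*x₂) + a^4*(b^2+y^2)) * (x₁ - x₂) = 0 := by
        linear_combination x₂*hq1 - x₁*hq2
      rcases mul_eq_zero.mp h with h' | h'
      · linarith
      · exact absurd h' hsub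
    have haP : 0 < a^4*(b^2+y^2) := by positivity
    have hQ : (a^2*y^2 - b^2*x^2) ≠ 0 := by
      intro h
      have h2 : (2*a^2*b^2)*x = 0 := by linear_combination hs - (x₁+x₂)*h
      have hx : x = 0 := by
        rcases mul_eq_zero.mp h2 with h3 | h3
        · exact absurd h3 (by positivity)
        · exact h3
      have h4 : a^4*(b^2+y^2) = 0 := by linear_combination -hq1 + x₁^2*h + (2*a^2*b^2*x₁)*hx
      linarith
    have hD1 : 0 < (x₁-x)^2 + (y₁-y)^2 := by
      rcases lt_or_eq_of_le (by positivity : (0:ℝ) ≤ (x₁-x)^2 + (y₁-y)^2) with h | h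
      · exact h
      exfalso
      have h2 : (x₁-x)^2 = 0 := by nlinarith [sq_nonneg (y₁-y), sq_nonneg (x₁-x)]
      have h3 : (y₁-y)^2 = 0 := by nlinarith [sq_nonneg (y₁-y), sq_nonneg (x₁-x)]
      have h1x : x₁ = x := by
        have := pow_eq_zero_iff (n := 2) (by norm_num) |>.mp h2
        linarith
      have h1y : y₁ = y := by
        have := pow_eq_zero_iff (n := 2) (by norm_num) |>.mp h3
        linarith
      have hW : b^2*x^2 - a^2*y^2 = a^2*b^2 := by
        linear_combination Hon1 + (-b^2*(x₁+x))*h1x + (a^2*(y₁+y))*h1y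
      have hzero : ((a^2*y^2-b^2*x^2)*(x₁-x₂))^2 = 0 := by
        linear_combination ((a^2*y^2-b^2*x^2)*(x₁+x₂) - 2*a^2*b^2*x)*hs
          + (-4*(a^2*y^2-b^2*x^2))*hp + (-4*a^4*y^2)*hW
      have h5 : (a^2*y^2-b^2*x^2)*(x₁-x₂) = 0 :=
        pow_eq_zero_iff (n := 2) (by norm_num) |>.mp hzero
      exact hsub ((mul_eq_zero.mp h5).resolve_left hQ)
    have hD2 : 0 < (x₂-x)^2 + (y₂-y)^2 := by
      rcases lt_or_eq_of_le (by positivity : (0:ℝ) ≤ (x₂-x)^2 + (y₂-y)^2) with h | h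
      · exact h
      exfalso
      have h2 : (x₂-x)^2 = 0 := by nlinarith [sq_nonneg (y₂-y), sq_nonneg (x₂-x)]
      have h3 : (y₂-y)^2 = 0 := by nlinarith [sq_nonneg (y₂-y), sq_nonneg (x₂-x)]
      have h1x : x₂ = x := by
        have := pow_eq_zero_iff (n := 2) (by norm_num) |>.mp h2
        linarith
      have h1y : y₂ = y := by
        have := pow_eq_zero_iff (n := 2) (by norm_num) |>.mp h3
        linarith
      have hW : b^2*x^2 - a^2*y^2 = a^2*b^2 := by
        linear_combination Hon2 + (-b^2*(x₂+x))*h1x + (a^2*(y₂+y))*h1y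
      have hzero : ((a^2*y^2-b^2*x^2)*(x₁-x₂))^2 = 0 := by
        linear_combination ((a^2*y^2-b^2*x^2)*(x₁+x₂) - 2*a^2*b^2*x)*hs
          + (-4*(a^2*y^2-b^2*x^2))*hp + (-4*a^4*y^2)*hW
      have h5 : (a^2*y^2-b^2*x^2)*(x₁-x₂) = 0 :=
        pow_eq_zero_iff (n := 2) (by norm_num) |>.mp hzero
      exact hsub ((mul_eq_zero.mp h5).resolve_left hQ)
    have hy2sq : 0 < y^2 := lt_of_le_of_ne (sq_nonneg y) (Ne.symm (pow_ne_zero 2 hy))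
    have hden : ((a^2+b^2-x^2)^2 + 2*y^2*(a^2+b^2+x^2) + y^4) ≠ 0 := by
      have h1 : 0 < y^2*a^2 := mul_pos hy2sq (pow_pos ha 2)
      have h2 : 0 ≤ y^2*x^2 := mul_nonneg hy2sq.le (sq_nonneg x)
      have h3 : 0 < y^2*b^2 := mul_pos hy2sq (pow_pos hb 2)
      have e : (a^2+b^2-x^2)^2 + 2*y^2*(a^2+b^2+x^2) + y^4
          = (a^2+b^2-x^2)^2 + 2*(y^2*a^2) + 2*(y^2*b^2) + 2*(y^2*x^2) + (y^2)^2 := by ring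
      have hpos : 0 < (a^2+b^2-x^2)^2 + 2*y^2*(a^2+b^2+x^2) + y^4 := by
        rw [e]
        have := sq_nonneg (a^2+b^2-x^2)
        have := sq_nonneg (y^2)
        linarith
      exact ne_of_gt hpos
    have hdQ : a^4*y^2*(a^2*y^2-b^2*x^2) ≠ 0 :=
      mul_ne_zero (mul_ne_zero (by positivity) (pow_ne_zero 2 hy)) hQ
    have hdQ2 : a^8*y^4*(a^2*y^2-b^2*x^2)^2 ≠ 0 :=
      mul_ne_zero (mul_ne_zero (by positivity) (pow_ne_zero 4 hy)) (pow_ne_zero 2 hQ)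
    have hN : (x₁ - x) * (x₂ - x) + (y₁ - y) * (y₂ - y)
        = ((a^4*y^2 + b^4*x^2)*(-(a^4*(b^2+y^2))) + ((-2*a^4*y^2*x - 2*a^2*b^2*x*(b^2+y^2))/2)*(-(2*a^2*b^2*x)) + (a^4*y^2*x^2 + a^4*(b^2+y^2)^2)*(a^2*y^2 - b^2*x^2)) / (a^4*y^2*(a^2*y^2-b^2*x^2)) := by
      rw [eq_div_iff hdQ]
      linear_combination (a^2*y^2 - b^2*x^2)*(a^2*y*y₂ - a^2*y^2)*hy1 + (a^2*y^2 - b^2*x^2)*(b^2*x*x₁ - a^2*(b^2+y^2))*hy2 + (a^4*y^2 + b^4*x^2)*hp + ((-2*a^4*y^2*x - 2*a^2*b^2*x*(b^2+y^2))/2)*hs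
    have hD : ((x₁ - x) ^ 2 + (y₁ - y) ^ 2) * ((x₂ - x) ^ 2 + (y₂ - y) ^ 2)
        = ((a^4*y^2 + b^4*x^2)^2*(a^4*(b^2+y^2))^2 + (a^4*y^2 + b^4*x^2)*(-2*a^4*y^2*x - 2*a^2*b^2*x*(b^2+y^2))*(a^4*(b^2+y^2))*(2*a^2*b^2*x) + (a^4*y^2 + b^4*x^2)*(a^4*y^2*x^2 + a^4*(b^2+y^2)^2)*((2*a^2*b^2*x)^2+2*(a^2*y^2 - b^2*x^2)*(a^4*(b^2+y^2))) - (-2*a^4*y^2*x - 2*a^2*b^2*x*(b^2+y^2))^2*(a^2*y^2 - b^2*x^2)*(a^4*(b^2+y^2)) - (-2*a^4*y^2*x - 2*a^2*b^2*x*(b^2+y^2))*(a^4*y^2*x^2 + a^4*(b^2+y^2)^2)*(a^2*y^2 - b^2*x^2)*(2*a^2*b^2*x) + (a^4*y^2*x^2 + a^4*(b^2+y^2)^2)^2*(a^2*y^2 - b^2*x^2)^2) / (a^8*y^4*(a^2*y^2-b^2*x^2)^2) := by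
      rw [eq_div_iff hdQ2]
      linear_combination (a^2*y^2 - b^2*x^2)^2*((a^2*y*y₁ - a^2*y^2)+(b^2*x*x₁ - a^2*(b^2+y^2)))*(a^4*y^2*(x₂-x)^2 + (a^2*y*y₂ - a^2*y^2)^2)*hy1 + (a^2*y^2 - b^2*x^2)^2*((a^2*y*y₂ - a^2*y^2)+(b^2*x*x₂ - a^2*(b^2+y^2)))*((a^4*y^2 + b^4*x^2)*x₁^2 + (-2*a^4*y^2*x - 2*a^2*b^2*x*(b^2+y^2))*x₁ + (a^4*y^2*x^2 + a^4*(b^2+y^2)^2))*hy2 + ((a^4*y^2 + b^4*x^2)^2*((a^2*y^2 - b^2*x^2)*(x₁*x₂) - (a^4*(b^2+y^2))) + (a^4*y^2 + b^4*x^2)*(-2*a^4*y^2*x - 2*a^2*b^2*x*(b^2+y^2))*(a^2*y^2 - b^2*x^2)*(x₁+x₂) - 2*(a^4*y^2 + b^4*x^2)*(a^4*y^2*x^2 + a^4*(b^2+y^2)^2)*(a^2*y^2 - b^2*x^2) + (-2*a^4*y^2*x - 2*a^2*b^2*x*(b^2+y^2))^2*(a^2*y^2 - b^2*x^2))*hp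 + (-(a^4*y^2 + b^4*x^2)*(-2*a^4*y^2*x - 2*a^2*b^2*x*(b^2+y^2))*(a^4*(b^2+y^2)) + (a^4*y^2 + b^4*x^2)*(a^4*y^2*x^2 + a^4*(b^2+y^2)^2)*((a^2*y^2 - b^2*x^2)*(x₁+x₂) - (2*a^2*b^2*x)) + (-2*a^4*y^2*x - 2*a^2*b^2*x*(b^2+y^2))*(a^4*y^2*x^2 + a^4*(b^2+y^2)^2)*(a^2*y^2 - b^2*x^2))*hs
    rw [hα, div_pow, mul_pow, Real.sq_sqrt hD1.le, Real.sq_sqrt hD2.le,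
      div_eq_div_iff (ne_of_gt (mul_pos hD1 hD2)) hden, hN, hD]
    rw [div_pow, div_mul_eq_mul_div, ← mul_div_assoc, div_eq_div_iff (by positivity) (by positivity)]
    ring
end

section
/- Let the hyperbolic ellipse with foci (±f,0), 0 < f < 1, and semimajor axis a (2a > d(F₁,F₂)) be given in the Beltrami–Klein model, and let P = (x,y) be a proper exterior point with two hyperbolic tangent lines to the ellipse meeting at angle α. Then cos²α = ((f²-1)cosh(2a)(x²+y²-1) + f²x² - 1)² / (-2(f²-1)y²(f²+x²) + (f²-x²)² + (f²-1)²y⁴). -/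
open Real

/-- The proper points of the hyperbolic ellipse with foci `(±f,0)` and semimajor axis `a`
in the Beltrami–Klein model. -/
def hypEllipse (a f : ℝ) : Set (ℝ × ℝ) :=
  {q | q.1 ^ 2 / Real.tanh a ^ 2 +
        q.2 ^ 2 / (1 + 1 / ((f ^ 2 - 1) * Real.cosh a ^ 2)) = 1 ∧
      q.1 ^ 2 + q.2 ^ 2 < 1}

/-- A line with coordinates `(1,u₁,u₂)` is tangent to a set if it meets it in exactly
one point. -/
def IsTangent (u₁ u₂ : ℝ) (C : Set (ℝ × ℝ)) : Prop :=
  ∃! q : ℝ × ℝ, q ∈ C ∧ 1 + u₁ * q.1 + u₂ * q.2 = 0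

/-!
In line coordinates `(1, u₁, u₂)` the tangents of the Euclidean ellipse `x²/A + y²/B = 1` form the
dual conic `A u₁² + B u₂² = 1`; for `A, B ∈ (0, 1)` that ellipse lies in the unit disk, so it is
the whole hyperbolic ellipse, with `A = tanh² a`, `B = 1 + 1 / ((f² - 1) cosh² a)`. The two
tangents through `P` are the two points of the dual conic on the line `1 + u₁ x + u₂ y = 0`, so
by Vieta all symmetric functions of `u, v`, hence `⟨u,v⟩² / (⟨u,u⟩⟨v,v⟩)`, are rational in
`x, y`; clearing the factor `(f² - 1) cosh² a` gives the stated form.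
-/

def ellipse (A B : ℝ) : Set (ℝ × ℝ) := {q | q.1 ^ 2 / A + q.2 ^ 2 / B = 1}

lemma mem_ellipse_iff {A B : ℝ} (hA : A ≠ 0) (hB : B ≠ 0) {q : ℝ × ℝ} :
    q ∈ ellipse A B ↔ B * q.1 ^ 2 + A * q.2 ^ 2 = A * B := by
  rw [ellipse, Set.mem_ofPred_eq, div_add_div _ _ hA hB, div_eq_one_iff_eq (mul_ne_zero hA hB)]
  ring_nf

lemma mul_add_mul_lt_add {A B a b : ℝ} (hA : A < 1) (hB : B < 1) (ha : 0 ≤ a) (hb : 0 ≤ b)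
    (hab : 0 < a + b) : A * a + B * b < a + b := by
  rcases le_total A B with h | h
  · nlinarith [mul_nonneg (sub_nonneg.2 h) ha, mul_pos (sub_pos.2 hB) hab]
  · nlinarith [mul_nonneg (sub_nonneg.2 h) hb, mul_pos (sub_pos.2 hA) hab]

lemma sq_add_sq_lt_one_of_mem_ellipse {A B : ℝ} (hA : A ∈ Set.Ioo 0 1) (hB : B ∈ Set.Ioo 0 1)
    {q : ℝ × ℝ} (hq : q ∈ ellipse A B) : q.1 ^ 2 + q.2 ^ 2 < 1 := by
  have hq' : q.1 ^ 2 / A + q.2 ^ 2 / B = 1 := hq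
  have key := mul_add_mul_lt_add hA.2 hB.2 (div_nonneg (sq_nonneg q.1) hA.1.le)
    (div_nonneg (sq_nonneg q.2) hB.1.le) (hq' ▸ one_pos)
  rwa [mul_div_cancel₀ _ hA.1.ne', mul_div_cancel₀ _ hB.1.ne', hq'] at key

lemma one_lt_sq_add_sq_of_mul_sq_add_mul_sq_eq_one {A B u₁ u₂ : ℝ} (hA : A < 1) (hB : B < 1)
    (h : A * u₁ ^ 2 + B * u₂ ^ 2 = 1) : 1 < u₁ ^ 2 + u₂ ^ 2 := by
  have hu : 0 < u₁ ^ 2 + u₂ ^ 2 := by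
    by_contra! h0
    have : u₁ ^ 2 = 0 ∧ u₂ ^ 2 = 0 := by constructor <;> nlinarith [sq_nonneg u₁, sq_nonneg u₂]
    simp [this] at h
  exact h ▸ mul_add_mul_lt_add hA hB (sq_nonneg u₁) (sq_nonneg u₂) hu

lemma IsTangent.mul_sq_add_mul_sq_eq_one {A B u₁ u₂ : ℝ} (hA : 0 < A) (hB : 0 < B)
    (h : IsTangent u₁ u₂ (ellipse A B)) : A * u₁ ^ 2 + B * u₂ ^ 2 = 1 := by
  obtain ⟨q, ⟨hq, hql⟩, huniq⟩ := h
  rw [mem_ellipse_iff hA.ne' hB.ne'] at hq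
  have hu : u₁ ≠ 0 ∨ u₂ ≠ 0 := by
    by_contra! h0
    simp [h0] at hql
  have hQ : 0 < B * u₂ ^ 2 + A * u₁ ^ 2 := by
    rcases hu with hu | hu <;> positivity
  -- `q + t (u₂, -u₁)` is the second intersection of the line with the ellipse
  set t := -2 * (B * q.1 * u₂ - A * q.2 * u₁) / (B * u₂ ^ 2 + A * u₁ ^ 2)
  have ht : t * (B * u₂ ^ 2 + A * u₁ ^ 2) = -2 * (B * q.1 * u₂ - A * q.2 * u₁) :=
    div_mul_cancel₀ _ hQ.ne'
  have hq' : (q.1 + t * u₂, q.2 - t * u₁) ∈ ellipse A B := by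
    rw [mem_ellipse_iff hA.ne' hB.ne']
    linear_combination hq + t * ht
  have ht0 : t = 0 := by
    have := huniq _ ⟨hq', by linear_combination hql⟩
    simp only [Prod.ext_iff, add_eq_left, sub_eq_self, mul_eq_zero] at this
    tauto
  have hL : B * q.1 * u₂ = A * q.2 * u₁ := by
    rw [ht0, zero_mul] at ht
    linarith
  have hq₁ : q.1 = -(A * u₁) := by
    refine mul_left_cancel₀ (mul_pos hA hB).ne' ?_
    linear_combination (-(A * u₁)) * hq + (-(A * q.2)) * hL + (A * B * q.1) * hql
  have hq₂ : q.2 = -(B * u₂) := by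
    refine mul_left_cancel₀ (mul_pos hA hB).ne' ?_
    linear_combination (-(B * u₂)) * hq + (B * q.1) * hL + (A * B * q.2) * hql
  rw [hq₁, hq₂] at hql
  linarith

lemma exists_eq_mul_of_mul_add_mul_eq_zero {x y d₁ d₂ : ℝ} (hxy : x ^ 2 + y ^ 2 ≠ 0)
    (h : x * d₁ + y * d₂ = 0) : ∃ t, d₁ = -(t * y) ∧ d₂ = t * x :=
  ⟨(x * d₂ - y * d₁) / (x ^ 2 + y ^ 2), by
    constructor
    · field_simp
      linear_combination x * h
    · field_simp
      linear_combination y * h⟩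

lemma vieta_of_tangents_through {A B x y u₁ u₂ v₁ v₂ : ℝ}
    (hu : A * u₁ ^ 2 + B * u₂ ^ 2 = 1) (hv : A * v₁ ^ 2 + B * v₂ ^ 2 = 1)
    (hPu : 1 + u₁ * x + u₂ * y = 0) (hPv : 1 + v₁ * x + v₂ * y = 0)
    (huv : (u₁, u₂) ≠ (v₁, v₂)) :
    (A * y ^ 2 + B * x ^ 2) * (u₁ + v₁) = -(2 * B * x) ∧
    (A * y ^ 2 + B * x ^ 2) * (u₂ + v₂) = -(2 * A * y) ∧
    (A * y ^ 2 + B * x ^ 2) * (u₁ * v₁) = B - y ^ 2 ∧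
    (A * y ^ 2 + B * x ^ 2) * (u₂ * v₂) = A - x ^ 2 ∧
    (A * y ^ 2 + B * x ^ 2) * (u₁ * v₂ + u₂ * v₁) = 2 * x * y := by
  have hxy : x ^ 2 + y ^ 2 ≠ 0 := by
    intro h
    rw [sq, sq, mul_self_add_mul_self_eq_zero] at h
    simp [h.1, h.2] at hPu
  obtain ⟨t, hd₁, hd₂⟩ := exists_eq_mul_of_mul_add_mul_eq_zero (d₁ := u₁ - v₁) (d₂ := u₂ - v₂)
    hxy (by linear_combination hPu - hPv)
  obtain rfl : u₁ = v₁ - t * y := by linarith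
  obtain rfl : u₂ = v₂ + t * x := by linarith
  have ht : t ≠ 0 := by rintro rfl; simp at huv
  -- `t` is the second root of the conic restricted to the line through `v` in direction `(-y, x)`
  have hW : t * (A * y ^ 2 + B * x ^ 2) = 2 * (A * y * v₁ - B * x * v₂) :=
    mul_left_cancel₀ ht (by linear_combination hu - hv)
  refine ⟨?_, ?_, ?_, ?_, ?_⟩
  · linear_combination (-y) * hW + 2 * B * x * hPv
  · linear_combination x * hW + 2 * A * y * hPv
  · linear_combination (-y * v₁) * hW + B * (x * v₁ + y * v₂ - 1) * hPv - y ^ 2 * hv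
  · linear_combination (x * v₂) * hW + A * (x * v₁ + y * v₂ - 1) * hPv - x ^ 2 * hv
  · linear_combination (x * v₁ - y * v₂) * hW + 2 * x * y * hv

lemma lor_one_mk (u₁ u₂ v₁ v₂ : ℝ) : lor (1, u₁, u₂) (1, v₁, v₂) = u₁ * v₁ + u₂ * v₂ - 1 := by
  simp only [lor]; ring

lemma lor_of_tangents_through {A B x y u₁ u₂ v₁ v₂ : ℝ}
    (hu : A * u₁ ^ 2 + B * u₂ ^ 2 = 1) (hv : A * v₁ ^ 2 + B * v₂ ^ 2 = 1)
    (hPu : 1 + u₁ * x + u₂ * y = 0) (hPv : 1 + v₁ * x + v₂ * y = 0)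
    (huv : (u₁, u₂) ≠ (v₁, v₂)) :
    (A * y ^ 2 + B * x ^ 2) * -lor (1, u₁, u₂) (1, v₁, v₂) =
        A * y ^ 2 + B * x ^ 2 - A - B + x ^ 2 + y ^ 2 ∧
    (A * y ^ 2 + B * x ^ 2) ^ 2 * (lor (1, u₁, u₂) (1, u₁, u₂) * lor (1, v₁, v₂) (1, v₁, v₂)) =
        (A * y ^ 2 + B * x ^ 2 - A - B + x ^ 2 + y ^ 2) ^ 2 +
          4 * (x ^ 2 + y ^ 2 - 1) * (A * B - (A * y ^ 2 + B * x ^ 2)) := by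
  obtain ⟨hs₁, hs₂, hp₁, hp₂, hr⟩ := vieta_of_tangents_through hu hv hPu hPv huv
  simp only [lor_one_mk]
  set W := A * y ^ 2 + B * x ^ 2
  constructor
  · linear_combination (-1 : ℝ) * hp₁ - hp₂
  · linear_combination (W * (u₁ * v₁) + B - y ^ 2 - 2 * W * (u₂ * v₂) + 2 * W) * hp₁
      + (W * (u₂ * v₂) + A - x ^ 2 - 2 * (B - y ^ 2) + 2 * W) * hp₂
      + (W * (u₁ * v₂ + u₂ * v₁) + 2 * x * y) * hr
      - (W * (u₁ + v₁) - 2 * B * x) * hs₁ - (W * (u₂ + v₂) - 2 * A * y) * hs₂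

lemma cos_sq_eq_of_tangents_through {A B x y u₁ u₂ v₁ v₂ α : ℝ}
    (hA₀ : 0 < A) (hA₁ : A < 1) (hB₀ : 0 < B) (hB₁ : B < 1)
    (hu : A * u₁ ^ 2 + B * u₂ ^ 2 = 1) (hv : A * v₁ ^ 2 + B * v₂ ^ 2 = 1)
    (hPu : 1 + u₁ * x + u₂ * y = 0) (hPv : 1 + v₁ * x + v₂ * y = 0)
    (huv : (u₁, u₂) ≠ (v₁, v₂))
    (hα : cos α = -lor (1, u₁, u₂) (1, v₁, v₂) /
        √(lor (1, u₁, u₂) (1, u₁, u₂) * lor (1, v₁, v₂) (1, v₁, v₂))) :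
    cos α ^ 2 = (A * y ^ 2 + B * x ^ 2 - A - B + x ^ 2 + y ^ 2) ^ 2 /
      ((A * y ^ 2 + B * x ^ 2 - A - B + x ^ 2 + y ^ 2) ^ 2 +
        4 * (x ^ 2 + y ^ 2 - 1) * (A * B - (A * y ^ 2 + B * x ^ 2))) := by
  obtain ⟨hn, hN⟩ := lor_of_tangents_through hu hv hPu hPv huv
  have hW : A * y ^ 2 + B * x ^ 2 ≠ 0 := by
    have : x ≠ 0 ∨ y ≠ 0 := by
      by_contra! h
      simp [h] at hPu
    rcases this with h | h <;> positivity
  have hprod : 0 ≤ lor (1, u₁, u₂) (1, u₁, u₂) * lor (1, v₁, v₂) (1, v₁, v₂) := by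
    simp only [lor_one_mk]
    have := one_lt_sq_add_sq_of_mul_sq_add_mul_sq_eq_one hA₁ hB₁ hu
    have := one_lt_sq_add_sq_of_mul_sq_add_mul_sq_eq_one hA₁ hB₁ hv
    apply mul_nonneg <;> nlinarith
  rw [hα, div_pow, sq_sqrt hprod, ← hN, ← hn, mul_pow,
    mul_div_mul_left _ _ (pow_ne_zero 2 hW)]

lemma tanh_sq_mem_Ioo {a : ℝ} (ha : a ≠ 0) : tanh a ^ 2 ∈ Set.Ioo 0 1 := by
  have : tanh a ≠ 0 := by
    rw [tanh_eq_sinh_div_cosh]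
    exact div_ne_zero (by simpa using sinh_injective.ne ha) (cosh_pos a).ne'
  refine ⟨by positivity, ?_⟩
  rw [sq_lt_one_iff_abs_lt_one, abs_lt]
  exact ⟨neg_one_lt_tanh a, tanh_lt_one a⟩

lemma one_add_one_div_mem_Ioo {k : ℝ} (hk : k < -1) : 1 + 1 / k ∈ Set.Ioo 0 1 := by
  have : -1 < 1 / k := by rw [lt_div_iff_of_neg (by linarith)]; linarith
  exact ⟨by linarith, by linarith [one_div_neg.2 (by linarith : k < 0)]⟩

lemma hypEllipse_eq_ellipse {a f : ℝ} (ha : tanh a ^ 2 ∈ Set.Ioo 0 1)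
    (hf : 1 + 1 / ((f ^ 2 - 1) * cosh a ^ 2) ∈ Set.Ioo 0 1) :
    hypEllipse a f = ellipse (tanh a ^ 2) (1 + 1 / ((f ^ 2 - 1) * cosh a ^ 2)) := by
  ext q
  exact and_iff_left_of_imp (sq_add_sq_lt_one_of_mem_ellipse ha hf)

lemma one_lt_mul_cosh_sq_of_lt_cosh_two_mul {a f : ℝ} (hf : f ^ 2 < 1)
    (hell : (1 + f ^ 2) / (1 - f ^ 2) < cosh (2 * a)) : 1 < (1 - f ^ 2) * cosh a ^ 2 := by
  rw [div_lt_iff₀ (by linarith), cosh_two_mul, sinh_sq] at hell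
  linarith

/-- Here `c = cosh² a`, so that the hypotheses say `A = tanh² a` and `B = 1 + 1 / ((f² - 1) c)`. -/
lemma isoptic_focal_form {A B c f x y : ℝ} (hk : (f ^ 2 - 1) * c ≠ 0) (hA : A * c = c - 1)
    (hB : B * ((f ^ 2 - 1) * c) = (f ^ 2 - 1) * c + 1) :
    (A * y ^ 2 + B * x ^ 2 - A - B + x ^ 2 + y ^ 2) ^ 2 /
      ((A * y ^ 2 + B * x ^ 2 - A - B + x ^ 2 + y ^ 2) ^ 2 +
        4 * (x ^ 2 + y ^ 2 - 1) * (A * B - (A * y ^ 2 + B * x ^ 2))) =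
    ((f ^ 2 - 1) * (2 * c - 1) * (x ^ 2 + y ^ 2 - 1) + f ^ 2 * x ^ 2 - 1) ^ 2 /
      (-2 * (f ^ 2 - 1) * y ^ 2 * (f ^ 2 + x ^ 2) + (f ^ 2 - x ^ 2) ^ 2 +
        (f ^ 2 - 1) ^ 2 * y ^ 4) := by
  set k := (f ^ 2 - 1) * c with hk_def
  have hkA : k * A = (f ^ 2 - 1) * (c - 1) := by linear_combination (f ^ 2 - 1) * hA
  have hkB : k * B = k + 1 := by linear_combination hB
  have hn : k * (A * y ^ 2 + B * x ^ 2 - A - B + x ^ 2 + y ^ 2) =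
      (f ^ 2 - 1) * (2 * c - 1) * (x ^ 2 + y ^ 2 - 1) + f ^ 2 * x ^ 2 - 1 := by
    linear_combination (y ^ 2 - 1) * hkA + (x ^ 2 - 1) * hkB
  have hN : k ^ 2 * ((A * y ^ 2 + B * x ^ 2 - A - B + x ^ 2 + y ^ 2) ^ 2 +
        4 * (x ^ 2 + y ^ 2 - 1) * (A * B - (A * y ^ 2 + B * x ^ 2))) =
      -2 * (f ^ 2 - 1) * y ^ 2 * (f ^ 2 + x ^ 2) + (f ^ 2 - x ^ 2) ^ 2 +
        (f ^ 2 - 1) ^ 2 * y ^ 4 := by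
    calc _ = (k * (A * y ^ 2 + B * x ^ 2 - A - B + x ^ 2 + y ^ 2)) ^ 2 +
          4 * (x ^ 2 + y ^ 2 - 1) * (k * A * (k * B) - k * (k * A * y ^ 2 + k * B * x ^ 2)) := by
          ring
      _ = _ := by
          rw [hn, hkA, hkB, hk_def]
          ring
  rw [← hn, ← hN, mul_pow, mul_div_mul_left _ _ (pow_ne_zero 2 hk)]

theorem stmt_19_general (a f x y u₁ u₂ v₁ v₂ α : ℝ)
    (ha : 0 < a) (hf : 0 < f) (hf' : f < 1)
    (hell : Real.cosh (2 * a) > (1 + f ^ 2) / (1 - f ^ 2))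
    (hPu : 1 + u₁ * x + u₂ * y = 0) (hPv : 1 + v₁ * x + v₂ * y = 0)
    (htu : IsTangent u₁ u₂ (hypEllipse a f)) (htv : IsTangent v₁ v₂ (hypEllipse a f))
    (huv : (u₁, u₂) ≠ (v₁, v₂))
    (hα : Real.cos α = -(lor (1, u₁, u₂) (1, v₁, v₂)) /
        Real.sqrt (lor (1, u₁, u₂) (1, u₁, u₂) * lor (1, v₁, v₂) (1, v₁, v₂))) :
    Real.cos α ^ 2 =
      ((f ^ 2 - 1) * Real.cosh (2 * a) * (x ^ 2 + y ^ 2 - 1) + f ^ 2 * x ^ 2 - 1) ^ 2 /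
      (-2 * (f ^ 2 - 1) * y ^ 2 * (f ^ 2 + x ^ 2) + (f ^ 2 - x ^ 2) ^ 2 +
        (f ^ 2 - 1) ^ 2 * y ^ 4) := by
  have hf2 : f ^ 2 < 1 := by nlinarith
  have hk := one_lt_mul_cosh_sq_of_lt_cosh_two_mul hf2 hell
  have hA := tanh_sq_mem_Ioo ha.ne'
  have hB := one_add_one_div_mem_Ioo (k := (f ^ 2 - 1) * cosh a ^ 2) (by linarith)
  rw [hypEllipse_eq_ellipse hA hB] at htu htv
  have hk0 : (f ^ 2 - 1) * cosh a ^ 2 ≠ 0 := by linarith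
  have hA' : tanh a ^ 2 * cosh a ^ 2 = cosh a ^ 2 - 1 := by
    rw [tanh_eq_sinh_div_cosh, div_pow, sinh_sq, div_mul_cancel₀ _ (by positivity)]
  have hB' : (1 + 1 / ((f ^ 2 - 1) * cosh a ^ 2)) * ((f ^ 2 - 1) * cosh a ^ 2) =
      (f ^ 2 - 1) * cosh a ^ 2 + 1 := by
    rw [add_mul, one_div_mul_cancel hk0, one_mul, add_comm]
  rw [cos_sq_eq_of_tangents_through hA.1 hA.2 hB.1 hB.2
      (htu.mul_sq_add_mul_sq_eq_one hA.1 hB.1) (htv.mul_sq_add_mul_sq_eq_one hA.1 hB.1)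
      hPu hPv huv hα,
    isoptic_focal_form hk0 hA' hB', cosh_two_mul, sinh_sq]
  ring

/-- Isoptic curves of the hyperbolic ellipse: if the two hyperbolic tangent lines from a
proper exterior point `P = (x,y)` meet at angle `α`, then
`cos²α = ((f²-1)cosh(2a)(x²+y²-1)+f²x²-1)² /
  (-2(f²-1)y²(f²+x²) + (f²-x²)² + (f²-1)²y⁴)`. -/
theorem stmt_19 (a f x y u₁ u₂ v₁ v₂ α : ℝ)
    (ha : 0 < a) (hf : 0 < f) (hf' : f < 1)
    (hell : Real.cosh (2 * a) > (1 + f ^ 2) / (1 - f ^ 2))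
    (hP : x ^ 2 + y ^ 2 < 1)
    (hext : x ^ 2 / Real.tanh a ^ 2 +
        y ^ 2 / (1 + 1 / ((f ^ 2 - 1) * Real.cosh a ^ 2)) > 1)
    (hPu : 1 + u₁ * x + u₂ * y = 0) (hPv : 1 + v₁ * x + v₂ * y = 0)
    (htu : IsTangent u₁ u₂ (hypEllipse a f)) (htv : IsTangent v₁ v₂ (hypEllipse a f))
    (huv : (u₁, u₂) ≠ (v₁, v₂))
    (hα : Real.cos α = -(lor (1, u₁, u₂) (1, v₁, v₂)) /
        Real.sqrt (lor (1, u₁, u₂) (1, u₁, u₂) * lor (1, v₁, v₂) (1, v₁, v₂))) :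
    Real.cos α ^ 2 =
      ((f ^ 2 - 1) * Real.cosh (2 * a) * (x ^ 2 + y ^ 2 - 1) + f ^ 2 * x ^ 2 - 1) ^ 2 /
      (-2 * (f ^ 2 - 1) * y ^ 2 * (f ^ 2 + x ^ 2) + (f ^ 2 - x ^ 2) ^ 2 +
        (f ^ 2 - 1) ^ 2 * y ^ 4) :=
  stmt_19_general a f x y u₁ u₂ v₁ v₂ α ha hf hf' hell hPu hPv htu htv huv hα
end
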